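/- arXiv:1505.02600 — 7 statements merged into one kernel-verified Lean document; each statement's English description precedes it below -/
import Mathlib

section
/- Let δ ∈ ℝ, let (λ_k)_{k≥0} be a strictly increasing sequence of positive real numbers, let λ_# ∈ (0, λ₀], and let f ∈ 𝒟(δ, λ, λ_#) with associated Dirichlet series L_n(s) = Σ_{k≥0} a^n_k λ_k^{−s}. Assume a⁰₀ ≠ 0. Then there exists δ' > δ such that for every constant C > 0, the set of zeroes of f in Ω_{δ',C} = {s ∈ ℂ : Re s > δ' and Re s ≤ C·log|Im s|} is finite. -/
/-- Membership in the class `𝒟(δ, λ)`: the Dirichlet series with coefficients `a`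
and frequencies `λ` converges absolutely at every real `σ > δ`. -/
def DirichletClass (δ : ℝ) (lam : ℕ → ℝ) (a : ℕ → ℂ) : Prop :=
  ∀ σ : ℝ, δ < σ → Summable fun k => ‖a k‖ * lam k ^ (-σ)

/-- The Dirichlet series `L(s) = Σ_k a_k λ_k^{-s}`. -/
noncomputable def DirichletSeries (lam : ℕ → ℝ) (a : ℕ → ℂ) (s : ℂ) : ℂ :=
  ∑' k, a k * (lam k : ℂ) ^ (-s)

/-!
For `Re s` large, `L₀(s)` is dominated by its leading term `a⁰₀ λ₀^{-s}`, while the higher terms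
`s^{-n} L_n(s)` of the expansion are `O(|s|⁻¹ λ₀^{-Re s})`. On `Ω_{δ',C}` we have
`Re s ≤ C log |s|`, so `λ_#^{-Re s} ≤ |s|^{C log⁺(λ₀/λ_#)} λ₀^{-Re s}`, and truncating the expansion
at an order `N ≥ C log⁺(λ₀/λ_#)` makes the remainder `O(|s|⁻¹ λ₀^{-Re s})` as well. Hence `f` has
no zeroes in `Ω_{δ',C}` outside a large disc. The zeroes inside the disc lie in a compact subset of
the half-plane `Re s > δ`, where `f` is holomorphic and not identically zero, so there are only
finitely many of them.
-/

open Real Filter Topology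

lemma Complex.norm_ofReal_cpow_neg {x : ℝ} (hx : 0 < x) (s : ℂ) :
    ‖(x : ℂ) ^ (-s)‖ = x ^ (-s.re) := by
  rw [Complex.norm_cpow_eq_rpow_re_of_pos hx, Complex.neg_re]

lemma rpow_neg_eq_div_rpow_mul {x y : ℝ} (hx : 0 < x) (hy : 0 < y) (σ : ℝ) :
    y ^ (-σ) = (x / y) ^ σ * x ^ (-σ) := by
  rw [div_rpow hx.le hy.le, rpow_neg hx.le, rpow_neg hy.le]
  field_simp [(rpow_pos_of_pos hx σ).ne']

lemma rpow_le_pow_of_le_mul_log {r x σ C : ℝ} {N : ℕ} (hr : 0 < r) (hx : 1 ≤ x) (hσ₀ : 0 ≤ σ)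
    (hσ : σ ≤ C * log x) (hN : C * max 0 (log r) ≤ N) : r ^ σ ≤ x ^ N := by
  calc r ^ σ = exp (log r * σ) := rpow_def_of_pos hr σ
    _ ≤ exp (log x * (C * max 0 (log r))) := by
      refine exp_le_exp.2 ?_
      calc log r * σ ≤ max 0 (log r) * σ := by gcongr; exact le_max_right _ _
        _ ≤ max 0 (log r) * (C * log x) := by gcongr
        _ = log x * (C * max 0 (log r)) := by ring
    _ = x ^ (C * max 0 (log r)) := (rpow_def_of_pos (by linarith) _).symm
    _ ≤ x ^ (N : ℝ) := rpow_le_rpow_of_exponent_le hx hN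
    _ = x ^ N := rpow_natCast x N

lemma zpow_neg_succ_mul_rpow_neg_le {x σ C lam₀ lam₁ : ℝ} {N : ℕ} (h₀ : 0 < lam₀) (h₁ : 0 < lam₁)
    (hx : 1 ≤ x) (hσ₀ : 0 ≤ σ) (hσ : σ ≤ C * log x) (hN : C * max 0 (log (lam₀ / lam₁)) ≤ N) :
    x ^ (-(N + 1 : ℤ)) * lam₁ ^ (-σ) ≤ x⁻¹ * lam₀ ^ (-σ) := by
  have hx₀ : 0 < x := by linarith
  calc x ^ (-(N + 1 : ℤ)) * lam₁ ^ (-σ)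
        = x ^ (-(N + 1 : ℤ)) * (lam₀ / lam₁) ^ σ * lam₀ ^ (-σ) := by
        rw [rpow_neg_eq_div_rpow_mul h₀ h₁, mul_assoc]
    _ ≤ x ^ (-(N + 1 : ℤ)) * x ^ N * lam₀ ^ (-σ) := by
        gcongr; exact rpow_le_pow_of_le_mul_log (div_pos h₀ h₁) hx hσ₀ hσ hN
    _ = x⁻¹ * lam₀ ^ (-σ) := by
        rw [← zpow_natCast, ← zpow_add₀ hx₀.ne', show -(N + 1 : ℤ) + N = -1 by ring, zpow_neg_one]

section DirichletSeries

variable {lam : ℕ → ℝ} {b : ℕ → ℂ} {σ₁ : ℝ} {s : ℂ}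

lemma norm_dirichletSeries_term_le (hpos : ∀ k, 0 < lam k) (hmono : Monotone lam)
    (hs : σ₁ ≤ s.re) (k : ℕ) :
    ‖b k * (lam k : ℂ) ^ (-s)‖ ≤ ‖b k‖ * lam k ^ (-σ₁) * lam 0 ^ σ₁ * lam 0 ^ (-s.re) := by
  rw [norm_mul, Complex.norm_ofReal_cpow_neg (hpos k), mul_assoc, mul_assoc]
  gcongr
  calc lam k ^ (-s.re) = lam k ^ (-σ₁) * lam k ^ (σ₁ + -s.re) := by
        rw [← rpow_add (hpos k)]; ring_nf
    _ ≤ lam k ^ (-σ₁) * lam 0 ^ (σ₁ + -s.re) := by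
        refine mul_le_mul_of_nonneg_left ?_ (rpow_nonneg (hpos k).le _)
        exact rpow_le_rpow_of_nonpos (hpos 0) (hmono k.zero_le) (by linarith)
    _ = lam k ^ (-σ₁) * (lam 0 ^ σ₁ * lam 0 ^ (-s.re)) := by rw [rpow_add (hpos 0)]

lemma summable_dirichletSeries (hpos : ∀ k, 0 < lam k) (hmono : Monotone lam)
    (hb : Summable fun k => ‖b k‖ * lam k ^ (-σ₁)) (hs : σ₁ ≤ s.re) :
    Summable fun k => b k * (lam k : ℂ) ^ (-s) :=
  ((hb.mul_right _).mul_right _).of_norm_bounded (norm_dirichletSeries_term_le hpos hmono hs)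

lemma exists_norm_dirichletSeries_le (hpos : ∀ k, 0 < lam k) (hmono : Monotone lam)
    (hb : Summable fun k => ‖b k‖ * lam k ^ (-σ₁)) :
    ∃ M, ∀ s : ℂ, σ₁ ≤ s.re → ‖DirichletSeries lam b s‖ ≤ M * lam 0 ^ (-s.re) :=
  ⟨(∑' k, ‖b k‖ * lam k ^ (-σ₁)) * lam 0 ^ σ₁, fun _ hs =>
    tsum_of_norm_bounded ((hb.hasSum.mul_right _).mul_right _)
      (norm_dirichletSeries_term_le hpos hmono hs)⟩

lemma dirichletSeries_eq_add_tail (hsum : Summable fun k => b k * (lam k : ℂ) ^ (-s)) :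
    DirichletSeries lam b s =
      b 0 * (lam 0 : ℂ) ^ (-s) + DirichletSeries (fun k => lam (k + 1)) (fun k => b (k + 1)) s :=
  hsum.tsum_eq_zero_add

/-- The tail beyond the leading term decays like `λ₁^{-Re s}`, which is `o(λ₀^{-Re s})`. -/
lemma exists_norm_dirichletSeries_sub_le (hpos : ∀ k, 0 < lam k) (hmono : StrictMono lam)
    (hb : Summable fun k => ‖b k‖ * lam k ^ (-σ₁)) {ε : ℝ} (hε : 0 < ε) :
    ∃ σ₀, ∀ s : ℂ, σ₀ ≤ s.re →
      ‖DirichletSeries lam b s - b 0 * (lam 0 : ℂ) ^ (-s)‖ ≤ ε * lam 0 ^ (-s.re) := by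
  obtain ⟨M, hM⟩ := exists_norm_dirichletSeries_le (fun k => hpos (k + 1))
    (fun i j h => hmono.monotone (Nat.succ_le_succ h)) ((summable_nat_add_iff 1).2 hb)
  have hlim : Tendsto (fun σ : ℝ => M * (lam 0 / lam 1) ^ σ) atTop (𝓝 0) := by
    have hratio : lam 0 / lam 1 < 1 := (div_lt_one (hpos 1)).2 (hmono zero_lt_one)
    simpa using (tendsto_rpow_atTop_of_base_lt_one _
      (by linarith [div_pos (hpos 0) (hpos 1)]) hratio).const_mul M
  obtain ⟨σ₂, hσ₂⟩ := eventually_atTop.1 (hlim.eventually (eventually_le_nhds hε))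
  refine ⟨max σ₁ σ₂, fun s hs => ?_⟩
  rw [dirichletSeries_eq_add_tail (summable_dirichletSeries hpos hmono.monotone hb
    (le_of_max_le_left hs)), add_sub_cancel_left]
  calc _ ≤ M * lam 1 ^ (-s.re) := hM s (le_of_max_le_left hs)
    _ = M * (lam 0 / lam 1) ^ s.re * lam 0 ^ (-s.re) := by
        rw [rpow_neg_eq_div_rpow_mul (hpos 0) (hpos 1), mul_assoc]
    _ ≤ ε * lam 0 ^ (-s.re) :=
        mul_le_mul_of_nonneg_right (hσ₂ _ (le_of_max_le_right hs)) (rpow_nonneg (hpos 0).le _)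

end DirichletSeries

section Expansion

variable {δ lamSharp σ₁ : ℝ} {lam : ℕ → ℝ} {a : ℕ → ℕ → ℂ} {f : ℂ → ℂ}

/-- The asymptotic expansion `f ~ Σ_n s^{-n} L_n(s)` defining the class `𝒟(δ, λ, λ_#)`. -/
def HasDirichletExpansion (δ lamSharp : ℝ) (lam : ℕ → ℝ) (a : ℕ → ℕ → ℂ) (f : ℂ → ℂ) : Prop :=
  ∀ N : ℕ, ∃ C : ℝ, 0 < C ∧ ∀ s : ℂ, δ < s.re →
    ‖f s - ∑ n ∈ Finset.range (N + 1), s ^ (-(n : ℤ)) * DirichletSeries lam (a n) s‖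
      ≤ C * ‖s‖ ^ (-(N + 1 : ℤ)) * lamSharp ^ (-s.re)

lemma exists_norm_sum_sub_dirichletSeries_le (hpos : ∀ k, 0 < lam k) (hmono : Monotone lam)
    (hb : ∀ n, Summable fun k => ‖a n k‖ * lam k ^ (-σ₁)) (N : ℕ) :
    ∃ M, ∀ s : ℂ, σ₁ ≤ s.re → 1 ≤ ‖s‖ →
      ‖∑ n ∈ Finset.range (N + 1), s ^ (-(n : ℤ)) * DirichletSeries lam (a n) s
          - DirichletSeries lam (a 0) s‖ ≤ M * ‖s‖⁻¹ * lam 0 ^ (-s.re) := by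
  induction N with
  | zero => exact ⟨0, fun s _ _ => by simp⟩
  | succ N ih =>
    obtain ⟨M, hM⟩ := ih
    obtain ⟨M', hM'⟩ := exists_norm_dirichletSeries_le hpos hmono (hb (N + 1))
    refine ⟨M + M', fun s hs hs₁ => ?_⟩
    have hpow : ‖s ^ (-((N + 1 : ℕ) : ℤ))‖ ≤ ‖s‖⁻¹ := by
      rw [norm_zpow, zpow_neg, zpow_natCast]
      exact inv_anti₀ (by linarith) (le_self_pow₀ hs₁ N.succ_ne_zero)
    rw [Finset.sum_range_succ, add_sub_right_comm]
    calc _ ≤ M * ‖s‖⁻¹ * lam 0 ^ (-s.re) + ‖s‖⁻¹ * (M' * lam 0 ^ (-s.re)) := by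
          refine (norm_add_le _ _).trans (add_le_add (hM s hs hs₁) ?_)
          rw [norm_mul]
          exact mul_le_mul hpow (hM' s hs) (norm_nonneg _) (by positivity)
      _ = (M + M') * ‖s‖⁻¹ * lam 0 ^ (-s.re) := by ring

lemma log_abs_im_le_log_norm {s : ℂ} (hs : 1 ≤ ‖s‖) : log |s.im| ≤ log ‖s‖ := by
  rcases eq_or_ne s.im 0 with h | h
  · simpa [h] using log_nonneg hs
  · exact log_le_log (abs_pos.2 h) (Complex.abs_im_le_norm s)

theorem exists_forall_ne_zero_of_hasDirichletExpansion (hmono : StrictMono lam)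
    (hpos : ∀ k, 0 < lam k) (hSharp : 0 < lamSharp) (hD : ∀ n, DirichletClass δ lam (a n))
    (hf : HasDirichletExpansion δ lamSharp lam a f) (ha : a 0 0 ≠ 0) :
    ∃ δ', δ < δ' ∧ ∀ C, 0 < C → ∃ R, ∀ s : ℂ,
      δ' < s.re → s.re ≤ C * log |s.im| → R ≤ ‖s‖ → f s ≠ 0 := by
  set A := ‖a 0 0‖
  have hA : 0 < A := norm_pos_iff.2 ha
  have hb n : Summable fun k => ‖a n k‖ * lam k ^ (-(δ + 1)) := hD n _ (lt_add_one δ)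
  obtain ⟨σ₀, htail⟩ :=
    exists_norm_dirichletSeries_sub_le hpos hmono (hb 0) (by positivity : 0 < A / 4)
  refine ⟨max (max σ₀ (δ + 1)) 0, lt_max_of_lt_left (lt_max_of_lt_right (lt_add_one δ)),
    fun C hC => ?_⟩
  obtain ⟨N, hN⟩ := exists_nat_ge (C * max 0 (log (lam 0 / lamSharp)))
  obtain ⟨K, hK₀, hK⟩ := hf N
  obtain ⟨M, hM⟩ := exists_norm_sum_sub_dirichletSeries_le hpos hmono.monotone hb N
  refine ⟨max 1 (4 * (M + K) / A), fun s hs hsC hR hfs => ?_⟩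
  simp only [max_lt_iff] at hs
  have hs₁ : 1 ≤ ‖s‖ := (le_max_left _ _).trans hR
  set E := lam 0 ^ (-s.re)
  have hE : 0 < E := rpow_pos_of_pos (hpos 0) _
  set S := ∑ n ∈ Finset.range (N + 1), s ^ (-(n : ℤ)) * DirichletSeries lam (a n) s
  have hrem : ‖f s - S‖ ≤ K * ‖s‖⁻¹ * E := by
    refine (hK s (by linarith)).trans ?_
    rw [mul_assoc, mul_assoc]
    refine mul_le_mul_of_nonneg_left ?_ hK₀.le
    exact zpow_neg_succ_mul_rpow_neg_le (hpos 0) hSharp hs₁ hs.2.le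
      (hsC.trans (mul_le_mul_of_nonneg_left (log_abs_im_le_log_norm hs₁) hC.le)) hN
  have hsmall : (M + K) * ‖s‖⁻¹ ≤ A / 4 := by
    rw [← div_eq_mul_inv, div_le_iff₀ (by linarith)]
    have := (le_max_right _ _).trans hR
    rw [div_le_iff₀ hA] at this
    linarith
  set L₀ := DirichletSeries lam (a 0) s
  set P := a 0 0 * (lam 0 : ℂ) ^ (-s)
  have hlead : A * E ≤ ‖f s - S‖ + ‖S - L₀‖ + ‖L₀ - P‖ := by
    have hdecomp : -P = (f s - S) + (S - L₀) + (L₀ - P) := by rw [hfs]; ring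
    calc A * E = ‖-P‖ := by rw [norm_neg, norm_mul, Complex.norm_ofReal_cpow_neg (hpos 0)]
      _ ≤ _ := hdecomp ▸ norm_add₃_le
  have := mul_le_mul_of_nonneg_right hsmall hE.le
  nlinarith [hM s (by linarith) hs₁, htail s (by linarith)]

end Expansion

theorem AnalyticOnNhd.finite_inter_preimage_zero_of_isCompact {𝕜 E : Type*}
    [NontriviallyNormedField 𝕜] [NormedAddCommGroup E] [NormedSpace 𝕜 E] {f : 𝕜 → E}
    {U K : Set 𝕜} (hf : AnalyticOnNhd 𝕜 f U) (hU : IsPreconnected U) (hKU : K ⊆ U)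
    (hK : IsCompact K) {z : 𝕜} (hzU : z ∈ U) (hz : f z ≠ 0) : (K ∩ f ⁻¹' {0}).Finite := by
  rcases hf.eqOn_zero_or_eventually_ne_zero_of_preconnected hU with h | h
  · exact absurd (h hzU) hz
  · exact (hK.finite_sdiff_of_mem_codiscreteWithin (codiscreteWithin_mono hKU h)).subset
      fun x hx => ⟨hx.1, fun hne => hne hx.2⟩

lemma exists_lt_re_le_mul_log_abs_im (δ' : ℝ) {C : ℝ} (hC : 0 < C) (R : ℝ) :
    ∃ s : ℂ, δ' < s.re ∧ s.re ≤ C * log |s.im| ∧ R ≤ ‖s‖ := by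
  set t := max R (exp ((δ' + 1) / C))
  have ht : 0 < t := (exp_pos _).trans_le (le_max_right _ _)
  refine ⟨⟨δ' + 1, t⟩, lt_add_one δ', ?_, ?_⟩
  · have : (δ' + 1) / C ≤ log t := (le_log_iff_exp_le ht).2 (le_max_right _ _)
    rw [abs_of_pos ht]
    rwa [div_le_iff₀' hC] at this
  · exact (le_max_left R _).trans ((le_abs_self t).trans (Complex.abs_im_le_norm ⟨δ' + 1, t⟩))

theorem stmt0_general (δ : ℝ) (lam : ℕ → ℝ) (hmono : StrictMono lam) (hpos : ∀ k, 0 < lam k)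
    (lamSharp : ℝ) (hSharp₀ : 0 < lamSharp)
    (a : ℕ → ℕ → ℂ) (hD : ∀ n, DirichletClass δ lam (a n))
    (f : ℂ → ℂ) (hf : DifferentiableOn ℂ f {s : ℂ | δ < s.re})
    (hrem : ∀ N : ℕ, ∃ C : ℝ, 0 < C ∧ ∀ s : ℂ, δ < s.re →
      ‖f s - ∑ n ∈ Finset.range (N + 1), s ^ (-(n : ℤ)) * DirichletSeries lam (a n) s‖
        ≤ C * ‖s‖ ^ (-(N + 1 : ℤ)) * lamSharp ^ (-s.re))
    (ha : a 0 0 ≠ 0) :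
    ∃ δ' : ℝ, δ < δ' ∧ ∀ C : ℝ, 0 < C →
      {s : ℂ | δ' < s.re ∧ s.re ≤ C * Real.log |s.im| ∧ f s = 0}.Finite := by
  obtain ⟨δ', hδδ', hne⟩ :=
    exists_forall_ne_zero_of_hasDirichletExpansion hmono hpos hSharp₀ hD hrem ha
  refine ⟨δ', hδδ', fun C hC => ?_⟩
  obtain ⟨R, hR⟩ := hne C hC
  set K := Metric.closedBall (0 : ℂ) R ∩ {s | δ' ≤ s.re}
  have hK : IsCompact K :=
    (isCompact_closedBall 0 R).inter_right (isClosed_le continuous_const Complex.continuous_re)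
  have hKU : K ⊆ {s | δ < s.re} := fun s hs => hδδ'.trans_le hs.2
  have hU : IsOpen {s : ℂ | δ < s.re} := isOpen_lt continuous_const Complex.continuous_re
  obtain ⟨s₁, hs₁, hs₁C, hs₁R⟩ := exists_lt_re_le_mul_log_abs_im δ' hC R
  refine ((hf.analyticOnNhd hU).finite_inter_preimage_zero_of_isCompact
    (convex_halfSpace_re_gt δ).isPreconnected hKU hK (hδδ'.trans hs₁)
    (hR s₁ hs₁ hs₁C hs₁R)).subset ?_
  rintro s ⟨hs, hsC, hfs⟩
  refine ⟨⟨mem_closedBall_zero_iff.2 ?_, hs.le⟩, hfs⟩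
  by_contra! hlt
  exact hR s hs hsC hlt.le hfs

/-- If `f ∈ 𝒟(δ, λ, λ_#)` and the leading coefficient `a⁰₀` of `L₀`
is nonzero, then there is `δ' > δ` such that for every `C > 0`, `f` has only finitely
many zeroes in `Ω_{δ',C} = {s : Re s > δ', Re s ≤ C log |Im s|}`. -/
theorem stmt0 (δ : ℝ) (lam : ℕ → ℝ) (hmono : StrictMono lam) (hpos : ∀ k, 0 < lam k)
    (lamSharp : ℝ) (hSharp₀ : 0 < lamSharp) (hSharp₁ : lamSharp ≤ lam 0)
    (a : ℕ → ℕ → ℂ) (hD : ∀ n, DirichletClass δ lam (a n))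
    (f : ℂ → ℂ) (hf : DifferentiableOn ℂ f {s : ℂ | δ < s.re})
    (hrem : ∀ N : ℕ, ∃ C : ℝ, 0 < C ∧ ∀ s : ℂ, δ < s.re →
      ‖f s - ∑ n ∈ Finset.range (N + 1), s ^ (-(n : ℤ)) * DirichletSeries lam (a n) s‖
        ≤ C * ‖s‖ ^ (-(N + 1 : ℤ)) * lamSharp ^ (-s.re))
    (ha : a 0 0 ≠ 0) :
    ∃ δ' : ℝ, δ < δ' ∧ ∀ C : ℝ, 0 < C →
      {s : ℂ | δ' < s.re ∧ s.re ≤ C * Real.log |s.im| ∧ f s = 0}.Finite :=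
  stmt0_general δ lam hmono hpos lamSharp hSharp₀ a hD f hf hrem ha
end

section
/- Let δ ∈ ℝ, let (λ_k)_{k≥0} be a strictly increasing sequence of positive real numbers, and let f ∈ 𝒟(δ, λ, λ₀) (i.e., the remainder parameter λ_# equals λ₀) with associated Dirichlet series L_n(s) = Σ_{k≥0} a^n_k λ_k^{−s}. Assume a⁰₀ ≠ 0. Then there exists δ' > δ such that f has no zeroes in the half-plane {s ∈ ℂ : Re s > δ'}. -/
/-!
Multiplying by `λ₀ ^ s` normalises the leading term: the `k`-th term of `λ₀ ^ s L₀(s)` is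
`a⁰ₖ (λ₀ / λₖ) ^ s`, which tends to `0` as `Re s → ∞` for `k ≥ 1`, uniformly dominated by its
value at a fixed abscissa of absolute convergence, while the remainder `λ₀ ^ s (f - L₀)` is
`O(1 / |s|)`. Hence `λ₀ ^ s f(s) → a⁰₀ ≠ 0`, so `f` has no zeroes far enough to the right.
-/

open Filter Topology

lemma norm_ofReal_cpow_mul_cpow_neg {x y : ℝ} (hx : 0 < x) (hy : 0 < y) (s : ℂ) :
    ‖(x : ℂ) ^ s * (y : ℂ) ^ (-s)‖ = (x / y) ^ s.re := by
  rw [norm_mul, Complex.norm_cpow_eq_rpow_re_of_pos hx, Complex.norm_cpow_eq_rpow_re_of_pos hy,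
    Complex.neg_re, Real.rpow_neg hy.le, Real.div_rpow hx.le hy.le, div_eq_mul_inv]

lemma tendsto_norm_comap_re_atTop : Tendsto (‖·‖) (comap Complex.re atTop) atTop :=
  tendsto_atTop_mono Complex.re_le_norm tendsto_comap

theorem DirichletClass.tendsto_cpow_mul_dirichletSeries {δ : ℝ} {lam : ℕ → ℝ} {a : ℕ → ℂ}
    (hmono : StrictMono lam) (hpos : ∀ k, 0 < lam k) (ha : DirichletClass δ lam a) :
    Tendsto (fun s => (lam 0 : ℂ) ^ s * DirichletSeries lam a s) (comap Complex.re atTop)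
      (𝓝 (a 0)) := by
  have hratio_le_one (k : ℕ) : lam 0 / lam k ≤ 1 :=
    (div_le_one (hpos k)).2 (hmono.monotone k.zero_le)
  have hterm (k : ℕ) : Tendsto (fun s : ℂ => a k * ((lam 0 : ℂ) ^ s * (lam k : ℂ) ^ (-s)))
      (comap Complex.re atTop) (𝓝 (if k = 0 then a 0 else 0)) := by
    rcases k.eq_zero_or_pos with rfl | hk
    · have hone (s : ℂ) : (lam 0 : ℂ) ^ s * (lam 0 : ℂ) ^ (-s) = 1 := by
        rw [Complex.cpow_neg, mul_inv_cancel₀ (Complex.cpow_ne_zero_iff.2 (Or.inl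
          (Complex.ofReal_ne_zero.2 (hpos 0).ne')))]
      simp only [hone, mul_one, if_true]
      exact tendsto_const_nhds
    · rw [if_neg hk.ne', ← mul_zero (a k)]
      refine tendsto_const_nhds.mul (tendsto_zero_iff_norm_tendsto_zero.2 ?_)
      simp only [norm_ofReal_cpow_mul_cpow_neg (hpos 0) (hpos k)]
      exact (tendsto_rpow_atTop_of_base_lt_one _ (by linarith [div_pos (hpos 0) (hpos k)])
        ((div_lt_one (hpos k)).2 (hmono hk))).comp tendsto_comap
  have hbound : ∀ᶠ s in comap Complex.re atTop, ∀ k,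
      ‖a k * ((lam 0 : ℂ) ^ s * (lam k : ℂ) ^ (-s))‖ ≤ ‖a k‖ * (lam 0 / lam k) ^ (δ + 1) := by
    filter_upwards [tendsto_comap.eventually (eventually_ge_atTop (δ + 1))] with s hs k
    rw [norm_mul, norm_ofReal_cpow_mul_cpow_neg (hpos 0) (hpos k)]
    gcongr ‖a k‖ * ?_
    exact Real.rpow_le_rpow_of_exponent_ge (div_pos (hpos 0) (hpos k)) (hratio_le_one k) hs
  have hsummable : Summable fun k => ‖a k‖ * (lam 0 / lam k) ^ (δ + 1) := by
    refine ((ha (δ + 1) (lt_add_one δ)).mul_left (lam 0 ^ (δ + 1))).congr fun k => ?_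
    rw [Real.div_rpow (hpos 0).le (hpos k).le, Real.rpow_neg (hpos k).le]
    ring
  have hseries (s : ℂ) : (lam 0 : ℂ) ^ s * DirichletSeries lam a s =
      ∑' k, a k * ((lam 0 : ℂ) ^ s * (lam k : ℂ) ^ (-s)) := by
    rw [DirichletSeries, ← tsum_mul_left]
    exact tsum_congr fun k => by ring
  simp only [hseries]
  simpa using tendsto_tsum_of_dominated_convergence hsummable hterm hbound

lemma tendsto_cpow_mul_of_norm_le {δ x C : ℝ} (hx : 0 < x) {g : ℂ → ℂ}
    (hg : ∀ s : ℂ, δ < s.re → ‖g s‖ ≤ C * ‖s‖ ^ (-1 : ℤ) * x ^ (-s.re)) :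
    Tendsto (fun s => (x : ℂ) ^ s * g s) (comap Complex.re atTop) (𝓝 0) := by
  have hinv : Tendsto (fun s : ℂ => C * ‖s‖⁻¹) (comap Complex.re atTop) (𝓝 0) := by
    simpa using (tendsto_inv_atTop_zero.comp tendsto_norm_comap_re_atTop).const_mul C
  refine squeeze_zero_norm' ?_ hinv
  filter_upwards [tendsto_comap.eventually (eventually_gt_atTop δ)] with s hs
  rw [norm_mul, Complex.norm_cpow_eq_rpow_re_of_pos hx]
  calc x ^ s.re * ‖g s‖ ≤ x ^ s.re * (C * ‖s‖ ^ (-1 : ℤ) * x ^ (-s.re)) := by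
        gcongr; exact hg s hs
    _ = C * ‖s‖⁻¹ := by
        rw [Real.rpow_neg hx.le, zpow_neg_one]
        field_simp [(Real.rpow_pos_of_pos hx s.re).ne']

theorem stmt1_general (δ : ℝ) (lam : ℕ → ℝ) (hmono : StrictMono lam) (hpos : ∀ k, 0 < lam k)
    (a : ℕ → ℕ → ℂ) (hD : ∀ n, DirichletClass δ lam (a n))
    (f : ℂ → ℂ)
    (hrem : ∀ N : ℕ, ∃ C : ℝ, 0 < C ∧ ∀ s : ℂ, δ < s.re →
      ‖f s - ∑ n ∈ Finset.range (N + 1), s ^ (-(n : ℤ)) * DirichletSeries lam (a n) s‖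
        ≤ C * ‖s‖ ^ (-(N + 1 : ℤ)) * lam 0 ^ (-s.re))
    (ha : a 0 0 ≠ 0) :
    ∃ δ' : ℝ, δ < δ' ∧ ∀ s : ℂ, δ' < s.re → f s ≠ 0 := by
  obtain ⟨C, -, hC⟩ := hrem 0
  have hlimit : Tendsto (fun s => (lam 0 : ℂ) ^ s * f s) (comap Complex.re atTop)
      (𝓝 (a 0 0)) := by
    have hrest := tendsto_cpow_mul_of_norm_le (hpos 0)
      (g := fun s => f s - DirichletSeries lam (a 0) s) (by simpa using hC)
    simpa [mul_sub] using ((hD 0).tendsto_cpow_mul_dirichletSeries hmono hpos).add hrest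
  have hne : ∀ᶠ σ in atTop, ∀ s : ℂ, s.re = σ → f s ≠ 0 :=
    eventually_comap.1 <| (hlimit.eventually_ne ha).mono fun s hs hf => hs (by simp [hf])
  obtain ⟨δ', hδ'⟩ := (hne.and (eventually_gt_atTop δ)).exists_forall_of_atTop
  exact ⟨δ', (hδ' δ' le_rfl).2, fun s hs => (hδ' s.re hs.le).1 s rfl⟩

/-- If `f ∈ 𝒟(δ, λ, λ₀)` (remainder parameter `λ_# = λ₀`) and the
leading coefficient `a⁰₀` of `L₀` is nonzero, then there is `δ' > δ` such that `f`
has no zeroes in the half-plane `{Re s > δ'}`. -/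
theorem stmt1 (δ : ℝ) (lam : ℕ → ℝ) (hmono : StrictMono lam) (hpos : ∀ k, 0 < lam k)
    (a : ℕ → ℕ → ℂ) (hD : ∀ n, DirichletClass δ lam (a n))
    (f : ℂ → ℂ) (hf : DifferentiableOn ℂ f {s : ℂ | δ < s.re})
    (hrem : ∀ N : ℕ, ∃ C : ℝ, 0 < C ∧ ∀ s : ℂ, δ < s.re →
      ‖f s - ∑ n ∈ Finset.range (N + 1), s ^ (-(n : ℤ)) * DirichletSeries lam (a n) s‖
        ≤ C * ‖s‖ ^ (-(N + 1 : ℤ)) * lam 0 ^ (-s.re))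
    (ha : a 0 0 ≠ 0) :
    ∃ δ' : ℝ, δ < δ' ∧ ∀ s : ℂ, δ' < s.re → f s ≠ 0 :=
  stmt1_general δ lam hmono hpos a hD f hrem ha
end

section
/- Let δ ∈ ℝ, let (λ_k)_{k≥0} be a strictly increasing sequence of positive real numbers, let λ_# ∈ (0, λ₀], and let f ∈ 𝒟(δ, λ, λ_#) with associated Dirichlet series L_n(s) = Σ_{k≥0} a^n_k λ_k^{−s}. Assume that at least one coefficient a^n_k is nonzero (i.e. some L_n is not identically zero). Then there exist δ' > δ and a constant C₀ > 0 such that the set of zeroes of f in Ω_{δ',C₀} = {s ∈ ℂ : Re s > δ' and Re s ≤ C₀·log|Im s|} is finite. -/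
/-!
Let `n₀` be the first row with a nonzero coefficient and `k₀` the first nonzero index in it. Then
for `σ = Re s` large, `s ^ n₀ f(s) = a^{n₀}_{k₀} λ_{k₀}^{-s} + O((λ_{k₀} / λ_{k₀+1})^σ λ_{k₀}^{-σ})
+ O(|s|⁻¹ λ_#^{-σ})`. In `Ω_{δ',C₀}` with `C₀ = λ_# / (2 λ_{k₀})` we have
`|s| ≥ |Im s| ≥ e^{σ / C₀} ≥ (2 λ_{k₀} / λ_#)^σ`, so the last error is `O(2^{-σ} λ_{k₀}^{-σ})`.
Once `δ'` is large both errors are smaller than the leading term, so `f` has no zeroes in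
`Ω_{δ',C₀}` at all.
-/

open Filter Topology

theorem exists_first_ne_zero {M : Type*} [Zero M] {a : ℕ → ℕ → M} (ha : ∃ n k, a n k ≠ 0) :
    ∃ n₀ k₀, a n₀ k₀ ≠ 0 ∧ (∀ n < n₀, a n = 0) ∧ ∀ k < k₀, a n₀ k = 0 := by
  classical
  have hk : ∃ k, a (Nat.find ha) k ≠ 0 := Nat.find_spec ha
  refine ⟨Nat.find ha, Nat.find hk, Nat.find_spec hk, fun n hn => ?_, fun k hk' => ?_⟩
  · funext k
    by_contra h
    exact Nat.find_min ha hn ⟨k, h⟩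
  · by_contra h
    exact Nat.find_min hk hk' h

section DirichletSeries

variable {δ : ℝ} {lam : ℕ → ℝ} {a : ℕ → ℂ}

theorem norm_mul_cpow_neg (c : ℂ) {x : ℝ} (hx : 0 < x) (s : ℂ) :
    ‖c * (x : ℂ) ^ (-s)‖ = ‖c‖ * x ^ (-s.re) := by
  rw [norm_mul, Complex.norm_cpow_eq_rpow_re_of_pos hx, Complex.neg_re]

theorem DirichletClass.summable (ha : DirichletClass δ lam a) (hpos : ∀ k, 0 < lam k) {s : ℂ}
    (hs : δ < s.re) : Summable fun k => a k * (lam k : ℂ) ^ (-s) :=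
  Summable.of_norm <| by simpa only [norm_mul_cpow_neg _ (hpos _)] using ha s.re hs

theorem DirichletClass.update_zero (ha : DirichletClass δ lam a) (hpos : ∀ k, 0 < lam k)
    (k₀ : ℕ) : DirichletClass δ lam (Function.update a k₀ 0) := fun σ hσ => by
  have hle : ∀ k, ‖Function.update a k₀ 0 k‖ ≤ ‖a k‖ := fun k => by
    rcases eq_or_ne k k₀ with rfl | hk
    · simp
    · rw [Function.update_of_ne hk]
  refine (ha σ hσ).of_nonneg_of_le (fun k => ?_) fun k => ?_
  · have := Real.rpow_nonneg (hpos k).le (-σ)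
    positivity
  · have := Real.rpow_nonneg (hpos k).le (-σ)
    gcongr
    exact hle k

theorem dirichletSeries_eq_add_update_zero (ha : DirichletClass δ lam a) (hpos : ∀ k, 0 < lam k)
    (k₀ : ℕ) {s : ℂ} (hs : δ < s.re) :
    DirichletSeries lam a s =
      a k₀ * (lam k₀ : ℂ) ^ (-s) + DirichletSeries lam (Function.update a k₀ 0) s := by
  classical
  rw [DirichletSeries, (ha.summable hpos hs).tsum_eq_add_tsum_ite k₀, DirichletSeries]
  simp only [Function.update_apply, ite_mul, zero_mul]

theorem dirichletSeries_zero (lam : ℕ → ℝ) (s : ℂ) : DirichletSeries lam 0 s = 0 := by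
  simp [DirichletSeries]

theorem norm_dirichletSeries_le_of_forall_lt_eq_zero (hmono : Monotone lam)
    (hpos : ∀ k, 0 < lam k) (ha : DirichletClass δ lam a) {m : ℕ} (hzero : ∀ k < m, a k = 0)
    {σ₁ : ℝ} (hσ₁ : δ < σ₁) {s : ℂ} (hs : σ₁ ≤ s.re) :
    ‖DirichletSeries lam a s‖ ≤
      lam m ^ σ₁ * (∑' k, ‖a k‖ * lam k ^ (-σ₁)) * lam m ^ (-s.re) := by
  have hterm : ∀ k, ‖a k * (lam k : ℂ) ^ (-s)‖ ≤
      lam m ^ (σ₁ - s.re) * (‖a k‖ * lam k ^ (-σ₁)) := by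
    intro k
    rw [norm_mul_cpow_neg _ (hpos k)]
    rcases lt_or_ge k m with hk | hk
    · simp [hzero k hk]
    · have hpow : lam k ^ (σ₁ - s.re) ≤ lam m ^ (σ₁ - s.re) :=
        Real.rpow_le_rpow_of_nonpos (hpos m) (hmono hk) (by linarith)
      calc ‖a k‖ * lam k ^ (-s.re) = ‖a k‖ * lam k ^ (-σ₁) * lam k ^ (σ₁ - s.re) := by
            rw [mul_assoc, ← Real.rpow_add (hpos k)]; ring_nf
        _ ≤ ‖a k‖ * lam k ^ (-σ₁) * lam m ^ (σ₁ - s.re) := by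
            have := Real.rpow_nonneg (hpos k).le (-σ₁)
            gcongr
        _ = _ := mul_comm _ _
  have hsum := (ha σ₁ hσ₁).mul_left (lam m ^ (σ₁ - s.re))
  calc ‖DirichletSeries lam a s‖
      ≤ ∑' k, lam m ^ (σ₁ - s.re) * (‖a k‖ * lam k ^ (-σ₁)) :=
        tsum_of_norm_bounded hsum.hasSum hterm
    _ = _ := by
        rw [tsum_mul_left, sub_eq_add_neg, Real.rpow_add (hpos m)]; ring

theorem exists_norm_dirichletSeries_sub_le_s3 (hmono : StrictMono lam) (hpos : ∀ k, 0 < lam k)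
    (ha : DirichletClass δ lam a) {k₀ : ℕ} (hzero : ∀ k < k₀, a k = 0) {σ₁ : ℝ}
    (hσ₁ : δ < σ₁) : ∃ B, ∀ s : ℂ, σ₁ ≤ s.re →
      ‖DirichletSeries lam a s - a k₀ * (lam k₀ : ℂ) ^ (-s)‖ ≤ B * lam (k₀ + 1) ^ (-s.re) := by
  refine ⟨lam (k₀ + 1) ^ σ₁ * ∑' k, ‖Function.update a k₀ 0 k‖ * lam k ^ (-σ₁), fun s hs => ?_⟩
  rw [dirichletSeries_eq_add_update_zero ha hpos k₀ (hσ₁.trans_le hs), add_sub_cancel_left]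
  refine norm_dirichletSeries_le_of_forall_lt_eq_zero hmono.monotone hpos
    (ha.update_zero hpos k₀) (fun k hk => ?_) hσ₁ hs
  rcases (Nat.lt_succ_iff.1 hk).lt_or_eq with hk | rfl
  · rw [Function.update_of_ne hk.ne, hzero k hk]
  · exact Function.update_self ..

theorem sum_range_zpow_mul_dirichletSeries_of_forall_lt_eq_zero {A : ℕ → ℕ → ℂ} {n₀ : ℕ}
    (hzero : ∀ n < n₀, A n = 0) (s : ℂ) :
    ∑ n ∈ Finset.range (n₀ + 1), s ^ (-(n : ℤ)) * DirichletSeries lam (A n) s =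
      s ^ (-(n₀ : ℤ)) * DirichletSeries lam (A n₀) s := by
  rw [Finset.sum_range_succ, add_eq_right]
  refine Finset.sum_eq_zero fun n hn => ?_
  rw [hzero n (Finset.mem_range.1 hn), dirichletSeries_zero, mul_zero]

end DirichletSeries

theorem rpow_re_le_norm_of_re_le_mul_log_abs_im {K C₀ : ℝ} (hK : 0 ≤ K) (hC₀ : 0 < C₀)
    (hKC₀ : K ≤ Real.exp C₀⁻¹) {s : ℂ} (hσ : 0 < s.re) (hs : s.re ≤ C₀ * Real.log |s.im|) :
    K ^ s.re ≤ ‖s‖ := by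
  have hlog : C₀⁻¹ * s.re ≤ Real.log |s.im| := by rwa [inv_mul_le_iff₀ hC₀]
  have him : 0 < |s.im| := abs_pos.2 fun h => by
    rw [h, abs_zero, Real.log_zero, mul_zero] at hs
    linarith
  calc K ^ s.re ≤ Real.exp C₀⁻¹ ^ s.re := Real.rpow_le_rpow hK hKC₀ hσ.le
    _ = Real.exp (C₀⁻¹ * s.re) := (Real.exp_mul _ _).symm
    _ ≤ |s.im| := (Real.le_log_iff_exp_le him).1 hlog
    _ ≤ ‖s‖ := Complex.abs_im_le_norm s

theorem le_add_of_mul_rpow_neg_le {x C B μ ν l S σ : ℝ} (hμ : 0 < μ) (hν : 0 < ν) (hl : 0 < l)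
    (hC : 0 ≤ C) (h : x * μ ^ (-σ) ≤ C * S⁻¹ * l ^ (-σ) + B * ν ^ (-σ))
    (hS : (2 * μ / l) ^ σ ≤ S) : x ≤ C * 2⁻¹ ^ σ + B * (μ / ν) ^ σ := by
  rw [Real.rpow_neg hμ.le, Real.rpow_neg hl.le, Real.rpow_neg hν.le] at h
  rw [Real.div_rpow (by positivity) hl.le, Real.mul_rpow zero_le_two hμ.le] at hS
  rw [Real.inv_rpow zero_le_two, Real.div_rpow hμ.le hν.le]
  have hm : 0 < μ ^ σ := Real.rpow_pos_of_pos hμ σ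
  have hL : 0 < l ^ σ := Real.rpow_pos_of_pos hl σ
  have ht : 0 < (2 : ℝ) ^ σ := Real.rpow_pos_of_pos two_pos σ
  have hSL : (S * l ^ σ)⁻¹ ≤ (2 ^ σ * μ ^ σ)⁻¹ :=
    inv_anti₀ (by positivity) ((div_le_iff₀ hL).1 hS)
  calc x = x * (μ ^ σ)⁻¹ * μ ^ σ := by field_simp
    _ ≤ (C * S⁻¹ * (l ^ σ)⁻¹ + B * (ν ^ σ)⁻¹) * μ ^ σ := mul_le_mul_of_nonneg_right h hm.le
    _ = C * (μ ^ σ * (S * l ^ σ)⁻¹) + B * (μ ^ σ / ν ^ σ) := by ring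
    _ ≤ C * (μ ^ σ * (2 ^ σ * μ ^ σ)⁻¹) + B * (μ ^ σ / ν ^ σ) := by gcongr
    _ = C * (2 ^ σ)⁻¹ + B * (μ ^ σ / ν ^ σ) := by field_simp

theorem norm_le_of_norm_zpow_mul_le {s w c : ℂ} {n : ℕ} {C B μ ν l : ℝ} (hμ : 0 < μ)
    (hν : 0 < ν) (hl : 0 < l) (hC : 0 ≤ C)
    (hrem : ‖0 - s ^ (-(n : ℤ)) * w‖ ≤ C * ‖s‖ ^ (-(n + 1 : ℤ)) * l ^ (-s.re))
    (hlead : ‖w - c * (μ : ℂ) ^ (-s)‖ ≤ B * ν ^ (-s.re)) (hs : (2 * μ / l) ^ s.re ≤ ‖s‖) :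
    ‖c‖ ≤ C * 2⁻¹ ^ s.re + B * (μ / ν) ^ s.re := by
  have hS : 0 < ‖s‖ := (Real.rpow_pos_of_pos (by positivity) _).trans_le hs
  have hw : ‖w‖ ≤ C * ‖s‖⁻¹ * l ^ (-s.re) := by
    have hP : 0 < ‖s‖ ^ (-(n : ℤ)) := zpow_pos hS _
    rw [zero_sub, norm_neg, norm_mul, norm_zpow, show -(n + 1 : ℤ) = -(n : ℤ) + -1 by ring,
      zpow_add₀ hS.ne', zpow_neg_one] at hrem
    refine le_of_mul_le_mul_left (hrem.trans_eq ?_) hP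
    ring
  refine le_add_of_mul_rpow_neg_le hμ hν hl hC ?_ hs
  rw [← norm_mul_cpow_neg c hμ s]
  linarith [norm_le_norm_add_norm_sub w (c * (μ : ℂ) ^ (-s))]

theorem stmt3_general (δ : ℝ) (lam : ℕ → ℝ) (hmono : StrictMono lam) (hpos : ∀ k, 0 < lam k)
    (lamSharp : ℝ) (hSharp₀ : 0 < lamSharp)
    (a : ℕ → ℕ → ℂ) (hD : ∀ n, DirichletClass δ lam (a n))
    (f : ℂ → ℂ)
    (hrem : ∀ N : ℕ, ∃ C : ℝ, 0 < C ∧ ∀ s : ℂ, δ < s.re →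
      ‖f s - ∑ n ∈ Finset.range (N + 1), s ^ (-(n : ℤ)) * DirichletSeries lam (a n) s‖
        ≤ C * ‖s‖ ^ (-(N + 1 : ℤ)) * lamSharp ^ (-s.re))
    (ha : ∃ n k, a n k ≠ 0) :
    ∃ δ' : ℝ, δ < δ' ∧ ∃ C₀ : ℝ, 0 < C₀ ∧
      {s : ℂ | δ' < s.re ∧ s.re ≤ C₀ * Real.log |s.im| ∧ f s = 0}.Finite := by
  obtain ⟨n₀, k₀, hne, hrow, hcol⟩ := exists_first_ne_zero ha
  obtain ⟨B, hB⟩ := exists_norm_dirichletSeries_sub_le_s3 hmono hpos (hD n₀) hcol (lt_add_one δ)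
  obtain ⟨C, hC, hCrem⟩ := hrem n₀
  set K := 2 * lam k₀ / lamSharp
  have hK : 0 < K := div_pos (mul_pos two_pos (hpos k₀)) hSharp₀
  have hdecay : Tendsto (fun σ : ℝ => C * 2⁻¹ ^ σ + B * (lam k₀ / lam (k₀ + 1)) ^ σ)
      atTop (𝓝 0) := by
    simpa using ((tendsto_rpow_atTop_of_base_lt_one _ (by norm_num) (by norm_num)).const_mul C).add
      ((tendsto_rpow_atTop_of_base_lt_one _ (neg_one_lt_zero.trans (div_pos (hpos _) (hpos _)))
        ((div_lt_one (hpos _)).2 (hmono k₀.lt_succ_self))).const_mul B)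
  obtain ⟨δ', hδ'⟩ := ((eventually_ge_atTop (δ + 1)).and <| (eventually_gt_atTop 0).and <|
    hdecay.eventually_lt_const (norm_pos_iff.2 hne)).exists_forall_of_atTop
  refine ⟨δ', by linarith [(hδ' δ' le_rfl).1], K⁻¹, inv_pos.2 hK, Set.finite_empty.subset ?_⟩
  rintro s ⟨hσ, hlog, hfs⟩
  obtain ⟨hσ₁, hσ₀, hlt⟩ := hδ' s.re hσ.le
  have hrem_s := hCrem s (by linarith)
  rw [sum_range_zpow_mul_dirichletSeries_of_forall_lt_eq_zero hrow, hfs] at hrem_s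
  have hKs : K ^ s.re ≤ ‖s‖ := rpow_re_le_norm_of_re_le_mul_log_abs_im hK.le (inv_pos.2 hK)
    (by rw [inv_inv]; linarith [Real.add_one_le_exp K]) hσ₀ hlog
  exact hlt.not_ge (norm_le_of_norm_zpow_mul_le (hpos k₀) (hpos (k₀ + 1)) hSharp₀ hC.le hrem_s
    (hB s hσ₁) hKs)

/-- If `f ∈ 𝒟(δ, λ, λ_#)` and at least one coefficient `aⁿ_k` is
nonzero, then there are `δ' > δ` and `C₀ > 0` such that `f` has only finitely many
zeroes in `Ω_{δ',C₀} = {s : Re s > δ', Re s ≤ C₀ log |Im s|}`. -/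
theorem stmt3 (δ : ℝ) (lam : ℕ → ℝ) (hmono : StrictMono lam) (hpos : ∀ k, 0 < lam k)
    (lamSharp : ℝ) (hSharp₀ : 0 < lamSharp) (hSharp₁ : lamSharp ≤ lam 0)
    (a : ℕ → ℕ → ℂ) (hD : ∀ n, DirichletClass δ lam (a n))
    (f : ℂ → ℂ) (hf : DifferentiableOn ℂ f {s : ℂ | δ < s.re})
    (hrem : ∀ N : ℕ, ∃ C : ℝ, 0 < C ∧ ∀ s : ℂ, δ < s.re →
      ‖f s - ∑ n ∈ Finset.range (N + 1), s ^ (-(n : ℤ)) * DirichletSeries lam (a n) s‖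
        ≤ C * ‖s‖ ^ (-(N + 1 : ℤ)) * lamSharp ^ (-s.re))
    (ha : ∃ n k, a n k ≠ 0) :
    ∃ δ' : ℝ, δ < δ' ∧ ∃ C₀ : ℝ, 0 < C₀ ∧
      {s : ℂ | δ' < s.re ∧ s.re ≤ C₀ * Real.log |s.im| ∧ f s = 0}.Finite :=
  stmt3_general δ lam hmono hpos lamSharp hSharp₀ a hD f hrem ha
end

section
/- Let d ≥ 1 be an integer, let B ∈ GL_d(ℝ) (so that Λ = B(ℤ^d) is a full-rank lattice in ℝ^d), let y > 0 and let s ∈ ℝ. Then the family of nonnegative reals (exp(−2s·arsinh(‖Bθ‖/(2y))))_{θ ∈ ℤ^d} is summable if and only if s > d/2. In particular, the critical exponent of this parabolic Poincaré series is d/2, and the series diverges at s = d/2. -/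
open Real Finset

lemma auxL1 {q : ℝ} (hq : 1 < q) : Summable (fun n : ℕ => (1 + (n : ℝ)) ^ (-q)) := by
  have h := (Real.summable_nat_rpow (p := -q)).mpr (by linarith)
  have h2 := (summable_nat_add_iff 1).mpr h
  refine h2.congr fun n => ?_
  push_cast
  ring_nf

lemma auxL2 {q : ℝ} (hq : 1 < q) : Summable (fun m : ℤ => (1 + |(m : ℝ)|) ^ (-q)) := by
  refine Summable.of_nat_of_neg ?_ ?_ <;>
    · refine (auxL1 hq).congr fun n => ?_
      push_cast
      simp [abs_of_nonneg, Nat.cast_nonneg]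

lemma auxL4 (g : ℤ → ℝ) (hg0 : ∀ m, 0 ≤ g m) (hg : Summable g) :
    ∀ n : ℕ, Summable (fun θ : Fin n → ℤ => ∏ i, g (θ i))
  | 0 => by
      simp only [Finset.univ_eq_empty, Finset.prod_empty]
      exact summable_of_finite_support (Set.toFinite _)
  | (n + 1) => by
      have hprev := auxL4 g hg0 hg n
      have h := hg.mul_of_nonneg hprev hg0 (fun θ => Finset.prod_nonneg fun i _ => hg0 _)
      refine (Fin.consEquiv (fun _ : Fin (n+1) => ℤ)).summable_iff.mp ?_
      refine h.congr fun p => ?_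
      simp only [Function.comp, Fin.consEquiv_apply]
      rw [Fin.prod_univ_succ]
      simp [Fin.cons_zero, Fin.cons_succ]

lemma auxBounds (d : ℕ) (B : Matrix (Fin d) (Fin d) ℝ) (hB : IsUnit B.det) :
    ∃ K C : ℝ, 1 ≤ K ∧ 0 < C ∧ ∀ θ : Fin d → ℤ,
      Real.sqrt (∑ i, (B.mulVec (fun j => (θ j : ℝ)) i) ^ 2) ≤ K * ∑ j, |(θ j : ℝ)| ∧
      (∑ j, |(θ j : ℝ)|) ≤ C * Real.sqrt (∑ i, (B.mulVec (fun j => (θ j : ℝ)) i) ^ 2) := by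
  set A : ℝ := ∑ i, ∑ j, |B i j| with hA
  have hA0 : 0 ≤ A := Finset.sum_nonneg fun i _ => Finset.sum_nonneg fun j _ => abs_nonneg _
  have hentry : ∀ i j, |B i j| ≤ A := by
    intro i j
    calc |B i j| ≤ ∑ j', |B i j'| :=
          Finset.single_le_sum (f := fun j' => |B i j'|) (fun j' _ => abs_nonneg _) (mem_univ j)
      _ ≤ A := Finset.single_le_sum (f := fun i' => ∑ j', |B i' j'|)
          (fun i' _ => Finset.sum_nonneg fun j' _ => abs_nonneg _) (mem_univ i)
  have hC0 : (0:ℝ) < (∑ j, ∑ i, |(B⁻¹) j i|) + 1 := by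
    have h0 : (0:ℝ) ≤ ∑ j, ∑ i, |(B⁻¹) j i| :=
      Finset.sum_nonneg fun j _ => Finset.sum_nonneg fun i _ => abs_nonneg _
    linarith
  refine ⟨Real.sqrt d * A + 1, (∑ j, ∑ i, |(B⁻¹) j i|) + 1, le_add_of_nonneg_left (by positivity), hC0, ?_⟩
  intro θ
  set v : Fin d → ℝ := fun j => (θ j : ℝ) with hv
  set w : Fin d → ℝ := B.mulVec v with hw
  set S : ℝ := ∑ j, |v j| with hS
  have hS0 : 0 ≤ S := Finset.sum_nonneg fun j _ => abs_nonneg _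
  have hSj : ∀ j, |v j| ≤ S :=
    fun j => Finset.single_le_sum (f := fun j' => |v j'|) (fun j' _ => abs_nonneg _) (mem_univ j)
  have hwle : ∀ i, |w i| ≤ A * S := by
    intro i
    calc |w i| = |∑ j, B i j * v j| := by rw [hw]; rfl
      _ ≤ ∑ j, |B i j * v j| := Finset.abs_sum_le_sum_abs _ _
      _ = ∑ j, |B i j| * |v j| := by simp [abs_mul]
      _ ≤ ∑ j, A * |v j| :=
          Finset.sum_le_sum fun j _ => mul_le_mul_of_nonneg_right (hentry i j) (abs_nonneg _)
      _ = A * S := by rw [← Finset.mul_sum]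
  set N : ℝ := Real.sqrt (∑ i, w i ^ 2) with hN
  have hN0 : 0 ≤ N := Real.sqrt_nonneg _
  have hwN : ∀ i, |w i| ≤ N := by
    intro i
    rw [hN, ← Real.sqrt_sq_eq_abs]
    exact Real.sqrt_le_sqrt (Finset.single_le_sum (f := fun i' => w i' ^ 2) (fun i' _ => sq_nonneg _) (mem_univ i))
  constructor
  · have h1 : ∑ i, w i ^ 2 ≤ (d : ℝ) * (A * S) ^ 2 := by
      calc ∑ i, w i ^ 2 ≤ ∑ _i : Fin d, (A * S) ^ 2 := by
            refine Finset.sum_le_sum fun i _ => ?_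
            rw [← sq_abs]
            exact pow_le_pow_left₀ (abs_nonneg _) (hwle i) 2
        _ = (d : ℝ) * (A * S) ^ 2 := by simp [mul_comm]
      
    calc N ≤ Real.sqrt ((d : ℝ) * (A * S) ^ 2) := Real.sqrt_le_sqrt h1
      _ = Real.sqrt d * (A * S) := by
          rw [Real.sqrt_mul (Nat.cast_nonneg d), Real.sqrt_sq (by positivity)]
      _ ≤ (Real.sqrt d * A + 1) * S := by nlinarith [Real.sqrt_nonneg (d : ℝ)]
  · have hvw : v = (B⁻¹).mulVec w := by
      rw [hw, Matrix.mulVec_mulVec, Matrix.nonsing_inv_mul B hB, Matrix.one_mulVec]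
    have hvj : ∀ j, |v j| ≤ (∑ i, |(B⁻¹) j i|) * N := by
      intro j
      calc |v j| = |∑ i, (B⁻¹) j i * w i| := by rw [hvw]; rfl
        _ ≤ ∑ i, |(B⁻¹) j i * w i| := Finset.abs_sum_le_sum_abs _ _
        _ = ∑ i, |(B⁻¹) j i| * |w i| := by simp [abs_mul]
        _ ≤ ∑ i, |(B⁻¹) j i| * N :=
            Finset.sum_le_sum fun i _ => mul_le_mul_of_nonneg_left (hwN i) (abs_nonneg _)
        _ = (∑ i, |(B⁻¹) j i|) * N := by rw [← Finset.sum_mul]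
    calc S ≤ ∑ j, (∑ i, |(B⁻¹) j i|) * N := Finset.sum_le_sum fun j _ => hvj j
      _ = (∑ j, ∑ i, |(B⁻¹) j i|) * N := by rw [← Finset.sum_mul]
      _ ≤ ((∑ j, ∑ i, |(B⁻¹) j i|) + 1) * N := by nlinarith

lemma auxConv (d : ℕ) (hd : 1 ≤ d) (B : Matrix (Fin d) (Fin d) ℝ) (hB : IsUnit B.det)
    (y : ℝ) (hy : 0 < y) (s : ℝ) (hs : (d : ℝ) / 2 < s) :
    Summable (fun θ : Fin d → ℤ =>
      Real.exp (-2 * s * Real.arsinh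
        (Real.sqrt (∑ i, (B.mulVec (fun j => (θ j : ℝ)) i) ^ 2) / (2 * y)))) := by
  obtain ⟨K, C, hK, hC, hbd⟩ := auxBounds d B hB
  have hd0 : (0:ℝ) < d := by exact_mod_cast Nat.lt_of_lt_of_le Nat.zero_lt_one hd
  have hs0 : 0 < s := lt_of_le_of_lt (by positivity) hs
  set q : ℝ := 2 * s / d with hqdef
  have hq : 1 < q := by rw [hqdef, lt_div_iff₀ hd0]; linarith
  set c : ℝ := min 1 (1 / (2 * y * C)) with hcdef
  have hc0 : 0 < c := lt_min one_pos (by positivity)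
  have hc1 : c ≤ 1 := min_le_left _ _
  have hsummaj : Summable (fun θ : Fin d → ℤ =>
      c ^ (-(2*s)) * ∏ i, (1 + |(θ i : ℝ)|) ^ (-q)) :=
    (auxL4 (fun m => (1 + |(m : ℝ)|) ^ (-q)) (fun m => Real.rpow_nonneg (by positivity) _)
      (auxL2 hq) d).mul_left _
  refine Summable.of_nonneg_of_le (fun θ => (Real.exp_pos _).le) (fun θ => ?_) hsummaj
  obtain ⟨h1, h2⟩ := hbd θ
  set S : ℝ := ∑ j, |(θ j : ℝ)| with hSdef
  have hS0 : 0 ≤ S := Finset.sum_nonneg fun j _ => abs_nonneg _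
  set N : ℝ := Real.sqrt (∑ i, (B.mulVec (fun j => (θ j : ℝ)) i) ^ 2) with hNdef
  have hN0 : 0 ≤ N := Real.sqrt_nonneg _
  set x : ℝ := N / (2 * y) with hxdef
  have hx0 : 0 ≤ x := by positivity
  have hfx : Real.exp (-2 * s * Real.arsinh x) = (x + Real.sqrt (1 + x ^ 2)) ^ (-(2*s)) := by
    rw [show -2 * s * Real.arsinh x = Real.arsinh x * (-(2*s)) by ring, Real.exp_mul,
      Real.exp_arsinh]
  have hu1 : 1 + x ≤ x + Real.sqrt (1 + x ^ 2) := by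
    have h := Real.sqrt_le_sqrt (show (1:ℝ) ≤ 1 + x ^ 2 by nlinarith)
    rw [Real.sqrt_one] at h
    linarith
  have hcS : c * (1 + S) ≤ 1 + x := by
    have hmin2 : c ≤ 1 / (2 * y * C) := min_le_right _ _
    have h3 : S / (2 * y * C) ≤ x := by
      rw [hxdef, div_le_div_iff₀ (by positivity) (by positivity)]
      nlinarith
    have h4 : c * S ≤ S / (2 * y * C) := by
      have := mul_le_mul_of_nonneg_right hmin2 hS0
      calc c * S ≤ 1 / (2 * y * C) * S := this
        _ = S / (2 * y * C) := by ring
    nlinarith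
  have key : (1 + S) ^ (-(2*s)) ≤ ∏ i, (1 + |(θ i : ℝ)|) ^ (-q) := by
    have hPle : (∏ i, (1 + |(θ i : ℝ)|)) ≤ (1 + S) ^ d := by
      have h5 : (∏ i, (1 + |(θ i : ℝ)|)) ≤ ∏ _i : Fin d, (1 + S) := by
        refine Finset.prod_le_prod (fun i _ => by positivity) (fun i _ => ?_)
        have h7 : |(θ i : ℝ)| ≤ ∑ j, |(θ j : ℝ)| := by
          simpa using Finset.single_le_sum (f := fun j => |(θ j : ℝ)|)
            (fun j _ => abs_nonneg _) (mem_univ i)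
        linarith [hSdef.ge]
      simpa using h5
    have h6 : ((1 + S) ^ d : ℝ) ^ (-q) ≤ (∏ i, (1 + |(θ i : ℝ)|)) ^ (-q) := by
      refine Real.rpow_le_rpow_of_nonpos ?_ hPle (by linarith)
      exact Finset.prod_pos fun i _ => by positivity
    rw [← Real.rpow_natCast (1 + S) d, ← Real.rpow_mul (by linarith)] at h6
    rw [show (d:ℝ) * (-q) = -(2*s) by rw [hqdef]; field_simp [hd0.ne']] at h6
    rw [← Real.finset_prod_rpow _ _ (fun i _ => by positivity) (-q)] at h6
    exact h6
  calc Real.exp (-2 * s * Real.arsinh x) = (x + Real.sqrt (1 + x ^ 2)) ^ (-(2*s)) := hfx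
    _ ≤ (1 + x) ^ (-(2*s)) := Real.rpow_le_rpow_of_nonpos (by linarith) hu1 (by linarith)
    _ ≤ (c * (1 + S)) ^ (-(2*s)) :=
        Real.rpow_le_rpow_of_nonpos (by positivity) hcS (by linarith)
    _ = c ^ (-(2*s)) * (1 + S) ^ (-(2*s)) := Real.mul_rpow hc0.le (by linarith)
    _ ≤ c ^ (-(2*s)) * ∏ i, (1 + |(θ i : ℝ)|) ^ (-q) :=
        mul_le_mul_of_nonneg_left key (Real.rpow_nonneg hc0.le _)

lemma auxOfReal {ι : Type*} (g : ι → ℝ) (hg : ∀ i, 0 ≤ g i)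
    (h : ∑' i, ENNReal.ofReal (g i) ≠ ⊤) : Summable g := by
  have h1 : Summable (fun i => (g i).toNNReal) := ENNReal.tsum_coe_ne_top_iff_summable.mp h
  have h2 := NNReal.summable_coe.mpr h1
  exact h2.congr fun i => Real.coe_toNNReal _ (hg i)

lemma auxL3 : ¬ Summable (fun m : ℤ => (1 + |(m : ℝ)|)⁻¹) := by
  intro h
  have h2 : Summable (fun n : ℕ => (1 + |((n : ℤ) : ℝ)|)⁻¹) :=
    h.comp_injective (fun a b hab => by exact_mod_cast hab)
  have h3 : Summable (fun n : ℕ => (((n + 1 : ℕ) : ℝ))⁻¹) := by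
    refine h2.congr fun n => ?_
    push_cast
    rw [abs_of_nonneg (Nat.cast_nonneg n), add_comm]
  have h4 := (summable_nat_add_iff (f := fun n : ℕ => ((n : ℝ))⁻¹) 1).mp h3
  exact Real.not_summable_natCast_inv h4

set_option maxHeartbeats 2000000 in
lemma auxDiv (d : ℕ) (hd : 1 ≤ d) (B : Matrix (Fin d) (Fin d) ℝ) (hB : IsUnit B.det)
    (y : ℝ) (hy : 0 < y) (s : ℝ) (hs : s ≤ (d : ℝ) / 2) :
    ¬ Summable (fun θ : Fin d → ℤ =>
      Real.exp (-2 * s * Real.arsinh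
        (Real.sqrt (∑ i, (B.mulVec (fun j => (θ j : ℝ)) i) ^ 2) / (2 * y)))) := by
  intro hSum
  obtain ⟨K, C, hK, hC, hbd⟩ := auxBounds d B hB
  have hd0 : (0:ℝ) < d := by exact_mod_cast Nat.lt_of_lt_of_le Nat.zero_lt_one hd
  set K' : ℝ := K / y + 1 with hK'def
  have hK'1 : 1 ≤ K' := by
    have h9 : 0 < K / y := by positivity
    rw [hK'def]
    linarith
  have hK'0 : 0 < K' := lt_of_lt_of_le one_pos hK'1
  have hlow : ∀ θ : Fin d → ℤ,
      (K' * (1 + ∑ j, |(θ j : ℝ)|)) ^ (-(d:ℝ)) ≤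
        Real.exp (-2 * s * Real.arsinh
          (Real.sqrt (∑ i, (B.mulVec (fun j => (θ j : ℝ)) i) ^ 2) / (2 * y))) := by
    intro θ
    obtain ⟨h1, h2⟩ := hbd θ
    set S : ℝ := ∑ j, |(θ j : ℝ)| with hSdef
    have hS0 : 0 ≤ S := Finset.sum_nonneg fun j _ => abs_nonneg _
    set N : ℝ := Real.sqrt (∑ i, (B.mulVec (fun j => (θ j : ℝ)) i) ^ 2) with hNdef
    have hN0 : 0 ≤ N := Real.sqrt_nonneg _
    set x : ℝ := N / (2 * y) with hxdef
    have hx0 : 0 ≤ x := by positivity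
    have hfx : Real.exp (-2 * s * Real.arsinh x) = (x + Real.sqrt (1 + x ^ 2)) ^ (-(2*s)) := by
      rw [show -2 * s * Real.arsinh x = Real.arsinh x * (-(2*s)) by ring, Real.exp_mul,
        Real.exp_arsinh]
    have hu1 : 1 + x ≤ x + Real.sqrt (1 + x ^ 2) := by
      have h := Real.sqrt_le_sqrt (show (1:ℝ) ≤ 1 + x ^ 2 by nlinarith)
      rw [Real.sqrt_one] at h
      linarith
    have hu2 : x + Real.sqrt (1 + x ^ 2) ≤ 1 + 2 * x := by
      have h : Real.sqrt (1 + x ^ 2) ≤ 1 + x := by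
        rw [show (1:ℝ) + x = Real.sqrt ((1 + x) ^ 2) by rw [Real.sqrt_sq (by linarith)]]
        exact Real.sqrt_le_sqrt (by nlinarith)
      linarith
    have hule : x + Real.sqrt (1 + x ^ 2) ≤ K' * (1 + S) := by
      have hq : x * (2 * y) = N := by rw [hxdef]; field_simp
      have h2x : 2 * x ≤ K / y * S := by
        refine le_of_mul_le_mul_right ?_ hy
        have e2 : K / y * S * y = K * S := by field_simp
        rw [e2]
        nlinarith [hq, h1]
      have hKy0 : 0 ≤ K / y := by positivity
      rw [hK'def]
      nlinarith [hu2, h2x, hS0, hKy0]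
    calc (K' * (1 + S)) ^ (-(d:ℝ))
        ≤ (x + Real.sqrt (1 + x ^ 2)) ^ (-(d:ℝ)) :=
          Real.rpow_le_rpow_of_nonpos (by linarith) hule (by linarith)
      _ ≤ (x + Real.sqrt (1 + x ^ 2)) ^ (-(2*s)) :=
          Real.rpow_le_rpow_of_exponent_le (by linarith) (by linarith)
      _ = _ := hfx.symm
  set G : (Fin d → ℤ) → ENNReal :=
    fun θ => ENNReal.ofReal ((K' * (1 + ∑ j, |(θ j : ℝ)|)) ^ (-(d:ℝ))) with hGdef
  have hTne : ∑' θ, G θ ≠ ⊤ := by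
    have hle : ∑' θ, G θ ≤ ∑' θ : Fin d → ℤ, ENNReal.ofReal
        (Real.exp (-2 * s * Real.arsinh
          (Real.sqrt (∑ i, (B.mulVec (fun j => (θ j : ℝ)) i) ^ 2) / (2 * y)))) :=
      ENNReal.tsum_le_tsum fun θ => ENNReal.ofReal_le_ofReal (hlow θ)
    rw [← ENNReal.ofReal_tsum_of_nonneg (fun θ => (Real.exp_pos _).le) hSum] at hle
    exact ne_top_of_le_ne_top ENNReal.ofReal_ne_top hle
  apply hTne
  obtain ⟨k, rfl⟩ : ∃ k, d = k + 1 := ⟨d - 1, by omega⟩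
  set D : ℝ := ((k + 1 : ℕ) : ℝ) with hDdef
  have hD1 : D = (k : ℝ) + 1 := by push_cast [hDdef]; ring
  have hD0 : 0 < D := hd0
  set c₂ : ℝ := (K' * D) ^ (-D) with hc₂def
  have hc₂0 : 0 < c₂ := Real.rpow_pos_of_pos (by positivity) _
  have he : ∑' θ : Fin (k+1) → ℤ, G θ = ∑' p : ℤ × (Fin k → ℤ), G (Fin.cons p.1 p.2) := by
    rw [← (Fin.consEquiv (fun _ : Fin (k+1) => ℤ)).tsum_eq G]
    rfl
  have hinner : ∀ m : ℤ, ENNReal.ofReal (c₂ * (1 + |(m:ℝ)|)⁻¹) ≤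
      ∑' w : Fin k → ℤ, G (Fin.cons m w) := by
    intro m
    set t : ℝ := 1 + |(m:ℝ)| with htdef
    have ht0 : 0 < t := by positivity
    set T : Finset (Fin k → ℤ) := Fintype.piFinset (fun _ => Finset.Icc (-|m|) |m|) with hTdef
    set b : ENNReal := ENNReal.ofReal ((K' * D * t) ^ (-D)) with hbdef
    have hcard : ((m.natAbs + 1) ^ k : ℕ) ≤ T.card := by
      rw [hTdef, Fintype.card_piFinset]
      have h8 : (Finset.Icc (-|m|) |m|).card = 2 * m.natAbs + 1 := by
        rw [Int.card_Icc, Int.abs_eq_natAbs]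
        omega
      simp only [h8, Finset.prod_const, Finset.card_univ, Fintype.card_fin]
      exact Nat.pow_le_pow_left (by omega) k
    have hterm : ∀ w ∈ T, b ≤ G (Fin.cons m w) := by
      intro w hw
      rw [hGdef, hbdef]
      refine ENNReal.ofReal_le_ofReal ?_
      refine Real.rpow_le_rpow_of_nonpos (by positivity) ?_ (by linarith)
      have hwm : ∀ i, |(w i : ℝ)| ≤ |(m : ℝ)| := by
        intro i
        have hmem := (Fintype.mem_piFinset.mp hw) i
        rw [Finset.mem_Icc] at hmem
        have : |w i| ≤ |m| := abs_le.mpr hmem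
        calc |(w i : ℝ)| = ((|w i| : ℤ) : ℝ) := by rw [Int.cast_abs]
          _ ≤ ((|m| : ℤ) : ℝ) := by exact_mod_cast this
          _ = |(m : ℝ)| := by rw [Int.cast_abs]
      have hScons : ∑ j, |((Fin.cons m w : Fin (k+1) → ℤ) j : ℝ)| =
          |(m:ℝ)| + ∑ i : Fin k, |(w i : ℝ)| := by
        rw [Fin.sum_univ_succ]
        simp
      have hSle : ∑ j, |((Fin.cons m w : Fin (k+1) → ℤ) j : ℝ)| ≤ ((k:ℝ) + 1) * |(m:ℝ)| := by
        rw [hScons]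
        have : ∑ i : Fin k, |(w i : ℝ)| ≤ (k : ℝ) * |(m:ℝ)| := by
          calc ∑ i : Fin k, |(w i : ℝ)| ≤ ∑ _i : Fin k, |(m:ℝ)| :=
                Finset.sum_le_sum fun i _ => hwm i
            _ = (k : ℝ) * |(m:ℝ)| := by simp [mul_comm]
        linarith
      have habs : (0:ℝ) ≤ |(m:ℝ)| := abs_nonneg _
      calc K' * (1 + ∑ j, |((Fin.cons m w : Fin (k+1) → ℤ) j : ℝ)|)
          ≤ K' * (1 + ((k:ℝ) + 1) * |(m:ℝ)|) := by nlinarith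
        _ ≤ K' * (((k:ℝ) + 1) * (1 + |(m:ℝ)|)) := by nlinarith
        _ = K' * D * t := by rw [hD1, htdef]; ring
    have hreal : c₂ * (1 + |(m:ℝ)|)⁻¹ = ((m.natAbs + 1 : ℕ) : ℝ) ^ k * (K' * D * t) ^ (-D) := by
      have hcast : ((m.natAbs + 1 : ℕ) : ℝ) = t := by
        rw [htdef]
        push_cast [Nat.cast_natAbs]
        ring
      rw [hcast, Real.mul_rpow (by positivity) ht0.le, ← Real.rpow_natCast t k]
      rw [hc₂def, htdef] at *
      rw [show t ^ (k:ℝ) * ((K' * D) ^ (-D) * t ^ (-D)) =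
        (K' * D) ^ (-D) * (t ^ (k:ℝ) * t ^ (-D)) by ring, ← Real.rpow_add ht0]
      rw [show (k:ℝ) + (-D) = -1 by rw [hD1]; ring, Real.rpow_neg_one]
    calc ENNReal.ofReal (c₂ * (1 + |(m:ℝ)|)⁻¹)
        = ENNReal.ofReal (((m.natAbs + 1 : ℕ) : ℝ) ^ k) * b := by
          rw [hreal, ENNReal.ofReal_mul (by positivity), hbdef]
      _ = (((m.natAbs + 1) ^ k : ℕ) : ENNReal) * b := by
          rw [show (((m.natAbs + 1 : ℕ) : ℝ) ^ k) = (((m.natAbs + 1) ^ k : ℕ) : ℝ) by push_cast; ring,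
            ENNReal.ofReal_natCast]
      _ ≤ (T.card : ENNReal) * b := by
          refine mul_le_mul_left ?_ b
          exact_mod_cast Nat.cast_le.mpr hcard
      _ = ∑ _w ∈ T, b := by rw [Finset.sum_const, nsmul_eq_mul]
      _ ≤ ∑ w ∈ T, G (Fin.cons m w) := Finset.sum_le_sum hterm
      _ ≤ ∑' w : Fin k → ℤ, G (Fin.cons m w) := ENNReal.sum_le_tsum T
  have hdiv : ∑' m : ℤ, ENNReal.ofReal (c₂ * (1 + |(m:ℝ)|)⁻¹) = ⊤ := by
    by_contra h
    have hsum2 := auxOfReal _ (fun m : ℤ => by positivity) h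
    have h2 : Summable (fun m : ℤ => (1 + |(m:ℝ)|)⁻¹) := by
      have h3 := hsum2.mul_left c₂⁻¹
      refine h3.congr fun m => ?_
      field_simp
    exact auxL3 h2
  rw [he, ENNReal.tsum_prod']
  exact eq_top_iff.mpr (hdiv ▸ ENNReal.tsum_le_tsum hinner)


/-- For a full-rank lattice `Λ = B(ℤ^d)` in `ℝ^d` and `y > 0`, the
parabolic Poincaré series `Σ_{θ ∈ ℤ^d} exp(-2s·arsinh(‖Bθ‖/(2y)))` converges iff
`s > d/2`; in particular it diverges at `s = d/2`. -/
theorem stmt6 (d : ℕ) (hd : 1 ≤ d) (B : Matrix (Fin d) (Fin d) ℝ) (hB : IsUnit B.det)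
    (y : ℝ) (hy : 0 < y) (s : ℝ) :
    (Summable (fun θ : Fin d → ℤ =>
        Real.exp (-2 * s * Real.arsinh
          (Real.sqrt (∑ i, (B.mulVec (fun j => (θ j : ℝ)) i) ^ 2) / (2 * y)))) ↔
      (d : ℝ) / 2 < s) ∧
    ¬ Summable (fun θ : Fin d → ℤ =>
        Real.exp (-2 * ((d : ℝ) / 2) * Real.arsinh
          (Real.sqrt (∑ i, (B.mulVec (fun j => (θ j : ℝ)) i) ^ 2) / (2 * y)))) := by
  constructor
  · constructor
    · intro h
      by_contra hc
      exact auxDiv d hd B hB y hy s (le_of_not_gt hc) h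
    · exact auxConv d hd B hB y hy s
  · exact auxDiv d hd B hB y hy ((d : ℝ) / 2) le_rfl
end

section
/- Let d ≥ 1 be an integer, let B ∈ GL_d(ℝ), and let σ > d/2 be real. Then there exist constants 0 < c ≤ C such that for every y ≥ 1 and every θ₀ ∈ ℝ^d, c·y^d ≤ Σ_{θ ∈ ℤ^d} exp(−2σ·arsinh(‖Bθ − θ₀‖/(2y))) ≤ C·y^d. -/
/-!
Write `x = θ - B⁻¹θ₀`, so that the summand is `exp (-2σ arsinh (‖Bx‖ / 2y))`. Since
`exp (-s arsinh t) ≤ (1 + t)^(-s)` and `‖x‖_∞ ≤ K ‖Bx‖`, the summand is at most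
`∏ᵢ (1 + |xᵢ| / 2Ky)^(-2σ/d)` with `2σ/d > 1`. The sum over `ℤ^d` is then at most a product of
`d` one-dimensional sums, each `O(y)`: grouping the integers into blocks of length `⌈2Ky⌉`
compares such a sum with `⌈2Ky⌉ ζ(2σ/d)`. For the lower bound, the sup-ball of radius `y` about
`B⁻¹θ₀` contains at least `y^d` lattice points, and on it the summand is at least
`exp (-2σ arsinh (‖B‖ / 2))`.
-/

open Finset
open scoped NNReal ENNReal

theorem ENNReal.tsum_pi_prod_le_prod_tsum {ι κ : Type*} [Fintype ι] (f : ι → κ → ℝ≥0∞) :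
    ∑' x : ι → κ, ∏ i, f i (x i) ≤ ∏ i, ∑' k, f i k := by
  classical
  rw [ENNReal.tsum_eq_iSup_sum]
  refine iSup_le fun s => ?_
  calc ∑ x ∈ s, ∏ i, f i (x i)
      ≤ ∑ x ∈ Fintype.piFinset fun i => s.image (· i), ∏ i, f i (x i) :=
        sum_le_sum_of_subset fun x hx =>
          Fintype.mem_piFinset.2 fun i => mem_image_of_mem _ hx
    _ = ∏ i, ∑ k ∈ s.image (· i), f i k := (prod_univ_sum _ _).symm
    _ ≤ ∏ i, ∑' k, f i k := prod_le_prod' fun i _ => ENNReal.sum_le_tsum _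

theorem summable_and_tsum_le_of_tsum_ofReal_le {α : Type*} {f : α → ℝ} (hf : ∀ a, 0 ≤ f a)
    {b : ℝ} (hb : 0 ≤ b) (h : ∑' a, ENNReal.ofReal (f a) ≤ ENNReal.ofReal b) :
    Summable f ∧ ∑' a, f a ≤ b := by
  have hsum : Summable f := by
    simpa only [ENNReal.toReal_ofReal (hf _)] using
      ENNReal.summable_toReal (ne_top_of_le_ne_top ENNReal.ofReal_ne_top h)
  refine ⟨hsum, ?_⟩
  rwa [← ENNReal.ofReal_tsum_of_nonneg hf hsum, ENNReal.ofReal_le_ofReal_iff hb] at h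

theorem tsum_nat_one_add_div_rpow_le {p c : ℝ} (hp : 0 ≤ p) (hc : 0 < c) :
    ∑' k : ℕ, ENNReal.ofReal ((1 + k / c) ^ (-p)) ≤
      ENNReal.ofReal (c + 1) * ∑' q : ℕ, ENNReal.ofReal (((q : ℝ) + 1) ^ (-p)) := by
  set m := ⌈c⌉₊
  have : NeZero m := ⟨(Nat.ceil_pos.2 hc).ne'⟩
  rw [← (Nat.divModEquiv m).symm.tsum_eq, ENNReal.tsum_prod']
  calc ∑' (q : ℕ) (r : Fin m),
        ENNReal.ofReal ((1 + ((Nat.divModEquiv m).symm (q, r) : ℕ) / c) ^ (-p))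
      ≤ ∑' (q : ℕ) (_ : Fin m), ENNReal.ofReal (((q : ℝ) + 1) ^ (-p)) := by
        refine ENNReal.tsum_le_tsum fun q => ENNReal.tsum_le_tsum fun r => ?_
        refine ENNReal.ofReal_le_ofReal (Real.rpow_le_rpow_of_nonpos (by positivity) ?_
          (neg_nonpos.2 hp))
        have : (q : ℝ) * c ≤ q * m + r := by
          nlinarith [Nat.le_ceil c, (r : ℕ).cast_nonneg (α := ℝ), q.cast_nonneg (α := ℝ)]
        rw [Nat.divModEquiv_symm_apply, add_comm (q : ℝ)]
        push_cast
        gcongr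
        rwa [le_div_iff₀ hc]
    _ = m * ∑' q : ℕ, ENNReal.ofReal (((q : ℝ) + 1) ^ (-p)) := by
        simp [tsum_fintype, ENNReal.tsum_mul_left]
    _ ≤ ENNReal.ofReal (c + 1) * ∑' q : ℕ, ENNReal.ofReal (((q : ℝ) + 1) ^ (-p)) := by
        gcongr
        rw [← ENNReal.ofReal_natCast]
        exact ENNReal.ofReal_le_ofReal (Nat.ceil_lt_add_one hc.le).le

theorem tsum_int_one_add_abs_sub_div_rpow_le {p c : ℝ} (hp : 0 ≤ p) (hc : 0 < c) (w : ℝ) :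
    ∑' n : ℤ, ENNReal.ofReal ((1 + |n - w| / c) ^ (-p)) ≤
      2 * ∑' k : ℕ, ENNReal.ofReal ((1 + k / c) ^ (-p)) := by
  -- after the shift by `⌈w⌉`, the `k`-th integers on either side are at distance `≥ k` from `w`
  rw [← (Equiv.addLeft ⌈w⌉).tsum_eq, ← tsum_nat_add_neg_add_one ENNReal.summable, two_mul,
    ← ENNReal.tsum_add]
  refine ENNReal.tsum_le_tsum fun k => add_le_add ?_ ?_ <;>
  refine ENNReal.ofReal_le_ofReal (Real.rpow_le_rpow_of_nonpos (by positivity) ?_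
    (neg_nonpos.2 hp)) <;> gcongr <;> simp only [Equiv.coe_addLeft] <;> push_cast
  · exact le_abs.2 (Or.inl (by linarith [Int.le_ceil w]))
  · exact le_abs.2 (Or.inr (by linarith [Int.ceil_lt_add_one w]))

theorem exists_tsum_int_one_add_abs_sub_div_rpow_le {p : ℝ} (hp : 1 < p) :
    ∃ C : ℝ≥0, ∀ c : ℝ, 1 ≤ c → ∀ w : ℝ,
      ∑' n : ℤ, ENNReal.ofReal ((1 + |n - w| / c) ^ (-p)) ≤ C * ENNReal.ofReal c := by
  set Z := ∑' q : ℕ, ENNReal.ofReal (((q : ℝ) + 1) ^ (-p)) with hZdef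
  have hZ : Z ≠ ∞ := by
    have h := (summable_nat_add_iff 1).2 (Real.summable_nat_rpow.2 (neg_lt_neg hp))
    push_cast at h
    rw [hZdef, ← ENNReal.ofReal_tsum_of_nonneg (fun q => by positivity) h]
    exact ENNReal.ofReal_ne_top
  refine ⟨4 * Z.toNNReal, fun c hc w => ?_⟩
  calc ∑' n : ℤ, ENNReal.ofReal ((1 + |n - w| / c) ^ (-p))
      ≤ 2 * (ENNReal.ofReal (c + 1) * Z) :=
        (tsum_int_one_add_abs_sub_div_rpow_le (by linarith) (by linarith) w).trans
          (mul_le_mul_right (tsum_nat_one_add_div_rpow_le (by linarith) (by linarith)) 2)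
    _ ≤ 2 * (ENNReal.ofReal (2 * c) * Z) := by gcongr; linarith
    _ = (4 * Z.toNNReal : ℝ≥0) * ENNReal.ofReal c := by
        rw [ENNReal.ofReal_mul zero_le_two, ENNReal.coe_mul, ENNReal.coe_toNNReal hZ]
        norm_num
        ring

theorem exists_tsum_pi_int_prod_one_add_abs_sub_div_rpow_le (ι : Type*) [Fintype ι] {p : ℝ}
    (hp : 1 < p) :
    ∃ C : ℝ≥0, ∀ c : ℝ, 1 ≤ c → ∀ v : ι → ℝ,
      ∑' θ : ι → ℤ, ∏ i, ENNReal.ofReal ((1 + |θ i - v i| / c) ^ (-p)) ≤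
        C * ENNReal.ofReal c ^ Fintype.card ι := by
  obtain ⟨C, hC⟩ := exists_tsum_int_one_add_abs_sub_div_rpow_le hp
  refine ⟨C ^ Fintype.card ι, fun c hc v => ?_⟩
  calc ∑' θ : ι → ℤ, ∏ i, ENNReal.ofReal ((1 + |θ i - v i| / c) ^ (-p))
      ≤ ∏ i, ∑' n : ℤ, ENNReal.ofReal ((1 + |n - v i| / c) ^ (-p)) :=
        ENNReal.tsum_pi_prod_le_prod_tsum _
    _ ≤ ∏ _i : ι, C * ENNReal.ofReal c := prod_le_prod' fun i _ => hC c hc (v i)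
    _ = (C ^ Fintype.card ι : ℝ≥0) * ENNReal.ofReal c ^ Fintype.card ι := by
        rw [prod_const, card_univ, mul_pow, ENNReal.coe_pow]

theorem one_add_div_rpow_le_prod {ι : Type*} [Fintype ι] {x : ι → ℝ} {r c p : ℝ}
    (hc : 0 < c) (hp : 0 ≤ p) (hx : ‖x‖ ≤ r) :
    (1 + r / c) ^ (-(Fintype.card ι * p)) ≤ ∏ i, (1 + |x i| / c) ^ (-p) := by
  have hr : 0 ≤ r := (norm_nonneg x).trans hx
  calc (1 + r / c) ^ (-(Fintype.card ι * p)) = ∏ _i : ι, (1 + r / c) ^ (-p) := by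
        rw [prod_const, card_univ, ← Real.rpow_natCast, ← Real.rpow_mul (by positivity)]
        ring_nf
    _ ≤ ∏ i, (1 + |x i| / c) ^ (-p) := by
        refine prod_le_prod (fun i _ => by positivity) fun i _ =>
          Real.rpow_le_rpow_of_nonpos (by positivity) ?_ (neg_nonpos.2 hp)
        gcongr
        exact (norm_le_pi_norm x i).trans hx

theorem exists_tsum_one_add_norm_div_rpow_le {ι E : Type*} [Fintype ι] [Nonempty ι]
    [SeminormedAddCommGroup E] {L : (ι → ℝ) → E} {K : ℝ} (hL : ∀ x, ‖x‖ ≤ K * ‖L x‖) {s : ℝ}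
    (hs : Fintype.card ι < s) :
    ∃ C : ℝ≥0, ∀ c : ℝ, 1 ≤ c → ∀ v : ι → ℝ,
      ∑' θ : ι → ℤ, ENNReal.ofReal ((1 + ‖L ((fun i => (θ i : ℝ)) - v)‖ / c) ^ (-s)) ≤
        C * ENNReal.ofReal c ^ Fintype.card ι := by
  set n := Fintype.card ι
  have hn : (0 : ℝ) < n := by exact_mod_cast Fintype.card_pos
  set K' := max K 1
  obtain ⟨C, hC⟩ := exists_tsum_pi_int_prod_one_add_abs_sub_div_rpow_le ι
    (p := s / n) ((one_lt_div hn).2 hs)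
  refine ⟨C * K'.toNNReal ^ n, fun c hc v => ?_⟩
  have hK' : 0 < K' := lt_max_of_lt_right one_pos
  have hK'c : 1 ≤ K' * c := one_le_mul_of_one_le_of_one_le (le_max_right _ _) hc
  calc ∑' θ : ι → ℤ, ENNReal.ofReal ((1 + ‖L ((fun i => (θ i : ℝ)) - v)‖ / c) ^ (-s))
      ≤ ∑' θ : ι → ℤ, ∏ i, ENNReal.ofReal ((1 + |θ i - v i| / (K' * c)) ^ (-(s / n))) := by
        refine ENNReal.tsum_le_tsum fun θ => ?_
        set x := (fun i => (θ i : ℝ)) - v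
        have hx : ‖x‖ ≤ K' * ‖L x‖ := (hL x).trans (by gcongr; exact le_max_left _ _)
        have h := one_add_div_rpow_le_prod (c := K' * c) (p := s / n) (by positivity)
          (div_nonneg (by linarith) hn.le) hx
        rw [mul_div_mul_left _ _ hK'.ne', mul_div_cancel₀ _ hn.ne'] at h
        rw [← ENNReal.ofReal_prod_of_nonneg fun i _ => by positivity]
        exact ENNReal.ofReal_le_ofReal h
    _ ≤ C * ENNReal.ofReal (K' * c) ^ n := hC _ hK'c v
    _ = (C * K'.toNNReal ^ n : ℝ≥0) * ENNReal.ofReal c ^ n := by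
        rw [ENNReal.ofReal_mul (by positivity), mul_pow, ENNReal.coe_mul, ENNReal.coe_pow,
          ENNReal.ofReal, mul_assoc]

theorem exists_finset_pow_le_card_forall_norm_sub_le (ι : Type*) [Fintype ι] (v : ι → ℝ)
    {y : ℝ} (hy : 1 ≤ y) :
    ∃ S : Finset (ι → ℤ), y ^ Fintype.card ι ≤ #S ∧
      ∀ θ ∈ S, ‖(fun i => (θ i : ℝ)) - v‖ ≤ y := by
  classical
  set N := ⌊y⌋₊
  refine ⟨Fintype.piFinset fun i => Icc ⌊v i⌋ (⌊v i⌋ + N), ?_, fun θ hθ => ?_⟩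
  · have hcard : ∀ i, #(Icc ⌊v i⌋ (⌊v i⌋ + N)) = N + 1 := fun i => by
      rw [Int.card_Icc]; omega
    rw [Fintype.card_piFinset, prod_congr rfl fun i _ => hcard i, prod_const, card_univ]
    push_cast
    gcongr
    exact (Nat.lt_floor_add_one y).le
  · refine (pi_norm_le_iff_of_nonneg (by linarith)).2 fun i => ?_
    obtain ⟨h₁, h₂⟩ := mem_Icc.1 (Fintype.mem_piFinset.1 hθ i)
    have h₁' : (⌊v i⌋ : ℝ) ≤ θ i := by exact_mod_cast h₁
    have h₂' : (θ i : ℝ) ≤ ⌊v i⌋ + N := by exact_mod_cast h₂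
    rw [Pi.sub_apply, Real.norm_eq_abs, abs_le]
    constructor <;> linarith [Int.floor_le (v i), Int.lt_floor_add_one (v i), Nat.floor_le
      (zero_le_one.trans hy)]

theorem mul_pow_le_tsum_of_le_of_norm_sub_le {ι : Type*} [Fintype ι] {f : (ι → ℤ) → ℝ}
    (hf : Summable f) (hf₀ : ∀ θ, 0 ≤ f θ) {a y : ℝ} (ha : 0 ≤ a) (hy : 1 ≤ y) (v : ι → ℝ)
    (hfa : ∀ θ, ‖(fun i => (θ i : ℝ)) - v‖ ≤ y → a ≤ f θ) :
    a * y ^ Fintype.card ι ≤ ∑' θ, f θ := by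
  obtain ⟨S, hcard, hS⟩ := exists_finset_pow_le_card_forall_norm_sub_le ι v hy
  calc a * y ^ Fintype.card ι ≤ a * #S := by gcongr
    _ = ∑ _θ ∈ S, a := by rw [sum_const, nsmul_eq_mul, mul_comm]
    _ ≤ ∑ θ ∈ S, f θ := sum_le_sum fun θ hθ => hfa θ (hS θ hθ)
    _ ≤ ∑' θ, f θ := hf.sum_le_tsum S fun θ _ => hf₀ θ

theorem Real.exp_neg_mul_arsinh_le {s t : ℝ} (hs : 0 ≤ s) (ht : 0 ≤ t) :
    exp (-s * arsinh t) ≤ (1 + t) ^ (-s) := by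
  have hlog : log (1 + t) ≤ arsinh t := by
    refine log_le_log (by positivity) ?_
    have : 1 ≤ √(1 + t ^ 2) := Real.one_le_sqrt.2 (by nlinarith)
    linarith
  rw [rpow_def_of_pos (by positivity), mul_comm (log _)]
  exact exp_le_exp.2 (by nlinarith)

open Real in
theorem exists_mul_pow_le_tsum_exp_arsinh_le {ι E : Type*} [Fintype ι] [Nonempty ι]
    [SeminormedAddCommGroup E] [NormedSpace ℝ E] (L : (ι → ℝ) →L[ℝ] E) {K : ℝ}
    (hL : ∀ x, ‖x‖ ≤ K * ‖L x‖) {σ : ℝ} (hσ : (Fintype.card ι : ℝ) / 2 < σ) :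
    ∃ c C : ℝ, 0 < c ∧ c ≤ C ∧ ∀ y : ℝ, 1 ≤ y → ∀ v : ι → ℝ,
      c * y ^ Fintype.card ι ≤
        ∑' θ : ι → ℤ, exp (-2 * σ * arsinh (‖L ((fun i => (θ i : ℝ)) - v)‖ / (2 * y))) ∧
      ∑' θ : ι → ℤ, exp (-2 * σ * arsinh (‖L ((fun i => (θ i : ℝ)) - v)‖ / (2 * y))) ≤
        C * y ^ Fintype.card ι := by
  set n := Fintype.card ι
  have hσ₀ : 0 < σ := lt_of_le_of_lt (by positivity) hσ
  obtain ⟨C, hC⟩ := exists_tsum_one_add_norm_div_rpow_le hL (s := 2 * σ) (by linarith)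
  set c₀ := exp (-2 * σ * arsinh (‖L‖ / 2))
  refine ⟨c₀, max c₀ (C * 2 ^ n), exp_pos _, le_max_left _ _, fun y hy v => ?_⟩
  set f : (ι → ℤ) → ℝ :=
    fun θ => exp (-2 * σ * arsinh (‖L ((fun i => (θ i : ℝ)) - v)‖ / (2 * y)))
  have hf₀ : ∀ θ, 0 ≤ f θ := fun θ => (exp_pos _).le
  have hupper : ∑' θ, ENNReal.ofReal (f θ) ≤ ENNReal.ofReal (C * 2 ^ n * y ^ n) :=
    calc ∑' θ, ENNReal.ofReal (f θ)
        ≤ ∑' θ : ι → ℤ, ENNReal.ofReal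
            ((1 + ‖L ((fun i => (θ i : ℝ)) - v)‖ / (2 * y)) ^ (-(2 * σ))) := by
          refine ENNReal.tsum_le_tsum fun θ => ENNReal.ofReal_le_ofReal ?_
          simpa only [f, neg_mul] using exp_neg_mul_arsinh_le (s := 2 * σ) (by positivity)
            (by positivity)
      _ ≤ C * ENNReal.ofReal (2 * y) ^ n := hC _ (by linarith) v
      _ = ENNReal.ofReal (C * 2 ^ n * y ^ n) := by
          rw [← ENNReal.ofReal_pow (by positivity), ← ENNReal.ofReal_coe_nnreal,
            ← ENNReal.ofReal_mul C.coe_nonneg, mul_pow, mul_assoc]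
  obtain ⟨hsum, hle⟩ := summable_and_tsum_le_of_tsum_ofReal_le hf₀ (by positivity) hupper
  have hlower : ∀ θ, ‖(fun i => (θ i : ℝ)) - v‖ ≤ y → c₀ ≤ f θ := fun θ hθ => by
    refine exp_le_exp.2 (mul_le_mul_of_nonpos_left (arsinh_le_arsinh.2 ?_) (by linarith))
    rw [div_le_div_iff₀ (by positivity) two_pos]
    calc ‖L ((fun i => (θ i : ℝ)) - v)‖ * 2 ≤ ‖L‖ * y * 2 := by gcongr; exact L.le_opNorm_of_le hθ
      _ = ‖L‖ * (2 * y) := by ring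
  exact ⟨mul_pow_le_tsum_of_le_of_norm_sub_le hsum hf₀ (exp_pos _).le hy v hlower,
    hle.trans (by gcongr; exact le_max_right _ _)⟩

/-- For `σ > d/2` there are constants `0 < c ≤ C` such that for every
`y ≥ 1` and `θ₀ ∈ ℝ^d`,
`c y^d ≤ Σ_{θ ∈ ℤ^d} exp(-2σ·arsinh(‖Bθ - θ₀‖/(2y))) ≤ C y^d`. -/
theorem stmt7 (d : ℕ) (hd : 1 ≤ d) (B : Matrix (Fin d) (Fin d) ℝ) (hB : IsUnit B.det)
    (σ : ℝ) (hσ : (d : ℝ) / 2 < σ) :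
    ∃ c C : ℝ, 0 < c ∧ c ≤ C ∧ ∀ y : ℝ, 1 ≤ y → ∀ θ₀ : Fin d → ℝ,
      c * y ^ d ≤ (∑' θ : Fin d → ℤ,
          Real.exp (-2 * σ * Real.arsinh
            (Real.sqrt (∑ i, (B.mulVec (fun j => (θ j : ℝ)) i - θ₀ i) ^ 2) / (2 * y)))) ∧
      (∑' θ : Fin d → ℤ,
          Real.exp (-2 * σ * Real.arsinh
            (Real.sqrt (∑ i, (B.mulVec (fun j => (θ j : ℝ)) i - θ₀ i) ^ 2) / (2 * y))))
        ≤ C * y ^ d := by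
  have : Nonempty (Fin d) := Fin.pos_iff_nonempty.1 hd
  let L : (Fin d → ℝ) →L[ℝ] EuclideanSpace ℝ (Fin d) := LinearMap.toContinuousLinearMap
    ((WithLp.linearEquiv 2 ℝ (Fin d → ℝ)).symm.toLinearMap ∘ₗ Matrix.toLin' B)
  have hL : ∀ x, ‖L x‖ = √(∑ i, (B.mulVec x) i ^ 2) := fun x => by
    simp [L, EuclideanSpace.norm_eq]
  have hinj : Function.Injective L := fun x x' h =>
    Matrix.mulVec_injective_iff_isUnit.2 ((Matrix.isUnit_iff_isUnit_det B).2 hB)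
      (by simpa [L] using h)
  obtain ⟨K, -, hK⟩ := L.toLinearMap.exists_antilipschitzWith (LinearMap.ker_eq_bot.2 hinj)
  obtain ⟨c, C, hc, hcC, hbounds⟩ :=
    exists_mul_pow_le_tsum_exp_arsinh_le L (hK.le_mul_norm (map_zero L)) (by simpa using hσ)
  refine ⟨c, C, hc, hcC, fun y hy θ₀ => ?_⟩
  have hsummand : ∀ θ : Fin d → ℤ, √(∑ i, (B.mulVec (fun j => (θ j : ℝ)) i - θ₀ i) ^ 2) =
      ‖L ((fun j => (θ j : ℝ)) - B⁻¹.mulVec θ₀)‖ := fun θ => by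
    rw [hL, Matrix.mulVec_sub, Matrix.mulVec_mulVec, Matrix.mul_nonsing_inv _ hB,
      Matrix.one_mulVec]
    rfl
  simp_rw [hsummand]
  simpa using hbounds y hy (B⁻¹.mulVec θ₀)
end

section
/- Let k > 0 and let a, b, c be nonnegative reals and γ ∈ [π/2, π] satisfy the hyperbolic law of cosines cosh(kc) = cosh(ka)·cosh(kb) − sinh(ka)·sinh(kb)·cos(γ). Then a + b − (log 4)/k ≤ c ≤ a + b. -/
/-- In constant curvature `-k²`, an obtuse geodesic triangle
(angle `γ ∈ [π/2, π]` opposite the side `c`) satisfies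
`a + b - (log 4)/k ≤ c ≤ a + b`. -/
theorem stmt9 (k a b c γ : ℝ) (hk : 0 < k) (ha : 0 ≤ a) (hb : 0 ≤ b) (hc : 0 ≤ c)
    (hγl : Real.pi / 2 ≤ γ) (hγu : γ ≤ Real.pi)
    (hlaw : Real.cosh (k * c)
      = Real.cosh (k * a) * Real.cosh (k * b)
        - Real.sinh (k * a) * Real.sinh (k * b) * Real.cos γ) :
    a + b - Real.log 4 / k ≤ c ∧ c ≤ a + b := by
  have hka : 0 ≤ k * a := mul_nonneg hk.le ha
  have hkb : 0 ≤ k * b := mul_nonneg hk.le hb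
  have hkc : 0 ≤ k * c := mul_nonneg hk.le hc
  have hsa : 0 ≤ Real.sinh (k * a) := by simpa using Real.sinh_le_sinh.2 hka
  have hsb : 0 ≤ Real.sinh (k * b) := by simpa using Real.sinh_le_sinh.2 hkb
  have hcosγ : Real.cos γ ≤ 0 :=
    Real.cos_nonpos_of_pi_div_two_le_of_le hγl (by linarith [Real.pi_pos])
  have hcosγ' : -1 ≤ Real.cos γ := Real.neg_one_le_cos γ
  constructor
  · -- lower bound
    have h1 : Real.cosh (k * a) * Real.cosh (k * b) ≤ Real.cosh (k * c) := by
      nlinarith [mul_nonneg hsa hsb]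
    have h2 : Real.exp (k * a) / 2 ≤ Real.cosh (k * a) := by
      rw [Real.cosh_eq]
      have := (Real.exp_pos (-(k * a))).le
      linarith
    have h3 : Real.exp (k * b) / 2 ≤ Real.cosh (k * b) := by
      rw [Real.cosh_eq]
      have := (Real.exp_pos (-(k * b))).le
      linarith
    have h4 : Real.cosh (k * c) ≤ Real.exp (k * c) := by
      rw [Real.cosh_eq]
      have : Real.exp (-(k * c)) ≤ Real.exp (k * c) :=
        Real.exp_le_exp.2 (by linarith)
      linarith
    have h5 : Real.exp (k * a) * Real.exp (k * b) / 4 ≤ Real.exp (k * c) := by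
      have hea := (Real.exp_pos (k * a)).le
      have heb := (Real.exp_pos (k * b)).le
      nlinarith [mul_le_mul h2 h3 (by positivity) (Real.cosh_pos (k * a)).le]
    have h6 : Real.exp (k * a + k * b - Real.log 4) ≤ Real.exp (k * c) := by
      rw [Real.exp_sub, Real.exp_add, Real.exp_log (by norm_num : (0:ℝ) < 4)]
      linarith [h5]
    have h7 : k * a + k * b - Real.log 4 ≤ k * c := Real.exp_le_exp.1 h6
    have h8 : a + b - c ≤ Real.log 4 / k := by
      rw [le_div_iff₀ hk]
      nlinarith
    linarith
  · -- upper bound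
    have h1 : Real.cosh (k * c) ≤ Real.cosh (k * a + k * b) := by
      rw [Real.cosh_add]
      nlinarith [mul_nonneg hsa hsb]
    have h2 : k * c ≤ k * a + k * b := by
      have := Real.cosh_le_cosh.1 h1
      rwa [abs_of_nonneg hkc, abs_of_nonneg (by linarith)] at this
    nlinarith
end

section
/- Let n ≥ 1 and let A, B ∈ M_n(ℝ) with A invertible. Define J(t) = e^t·A + e^{−t}·B. Then there exist t₀ ∈ ℝ and C > 0 such that for every t ≥ t₀ the matrix J(t) is invertible and ‖J'(t)·J(t)^{−1} − I‖ ≤ C·e^{−2t}, where J'(t) = e^t·A − e^{−t}·B and I is the identity matrix. -/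
open Matrix Filter

attribute [local instance] Matrix.normedAddCommGroup Matrix.normedSpace

/-- For `J(t) = e^t A + e^{-t} B` with `A` invertible, for `t` large
`J(t)` is invertible and `‖J'(t) J(t)⁻¹ - 1‖ ≤ C e^{-2t}`. -/
theorem stmt11 (n : ℕ) (hn : 1 ≤ n) (A B : Matrix (Fin n) (Fin n) ℝ)
    (hA : IsUnit A.det) :
    ∃ t₀ : ℝ, ∃ C : ℝ, 0 < C ∧ ∀ t : ℝ, t₀ ≤ t →
      IsUnit (Real.exp t • A + Real.exp (-t) • B) ∧
      ‖(Real.exp t • A - Real.exp (-t) • B) * (Real.exp t • A + Real.exp (-t) • B)⁻¹ - 1‖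
        ≤ C * Real.exp (-2 * t) := by
  classical
  have hM : Continuous fun s : ℝ => A + s • B := by continuity
  have hdet0 : (A + (0:ℝ) • B).det = A.det := by simp
  have hAdet_ne : A.det ≠ 0 := hA.ne_zero
  have h1 : ∀ᶠ s : ℝ in nhds 0, (A + s • B).det ≠ 0 :=
    (hM.matrix_det).continuousAt.eventually_ne (by rw [hdet0]; exact hAdet_ne)
  have h2 : ContinuousAt Inv.inv (A + (0:ℝ) • B) := by
    apply continuousAt_matrix_inv
    rw [Ring.inverse_eq_inv']
    exact continuousAt_inv₀ (by rw [hdet0]; exact hAdet_ne)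
  have h3 : ContinuousAt (fun s : ℝ => (A + s • B)⁻¹) 0 := h2.tendsto.comp hM.continuousAt
  have hinv : ContinuousAt (fun s : ℝ => B * (A + s • B)⁻¹) 0 :=
    continuousAt_const.mul h3
  set K : ℝ := ‖B * A⁻¹‖ + 1 with hK
  have hKpos : 0 < K := by positivity
  have hnormev : ∀ᶠ s : ℝ in nhds 0, ‖B * (A + s • B)⁻¹‖ < K := by
    have ht : Tendsto (fun s : ℝ => ‖B * (A + s • B)⁻¹‖) (nhds 0)
        (nhds ‖B * (A + (0:ℝ) • B)⁻¹‖) := hinv.norm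
    have hlt : ‖B * (A + (0:ℝ) • B)⁻¹‖ < K := by
      simp only [zero_smul, add_zero, hK]; linarith
    exact ht.eventually_lt_const hlt
  -- combine: get δ > 0
  obtain ⟨δ, hδpos, hδ⟩ := Metric.eventually_nhds_iff_ball.mp (h1.and hnormev)
  -- choose t₀ with exp (-2 t₀) < δ
  set t₀ : ℝ := -(Real.log δ) / 2 + 1 with ht₀
  refine ⟨t₀, 2 * K, by positivity, fun t ht => ?_⟩
  set s : ℝ := Real.exp (-2 * t) with hs
  have hsδ : s ∈ Metric.ball (0:ℝ) δ := by
    simp only [Metric.mem_ball, Real.dist_eq, sub_zero, hs]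
    rw [abs_of_pos (Real.exp_pos _)]
    have : -2 * t ≤ Real.log δ - 2 := by
      have := ht; rw [ht₀] at this; nlinarith
    calc Real.exp (-2 * t) ≤ Real.exp (Real.log δ - 2) := Real.exp_le_exp.2 this
      _ = δ * Real.exp (-2) := by rw [Real.exp_sub, Real.exp_log hδpos, Real.exp_neg]; ring
      _ < δ * 1 := by
        have := Real.exp_lt_one_iff.mpr (show (-2:ℝ) < 0 by norm_num)
        nlinarith
      _ = δ := mul_one δ
  obtain ⟨hdne, hnb⟩ := hδ s hsδ
  -- rewrite J
  have hJ : Real.exp t • A + Real.exp (-t) • B = Real.exp t • (A + s • B) := by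
    rw [smul_add, smul_smul, hs, ← Real.exp_add]; ring_nf
  have hJ' : Real.exp t • A - Real.exp (-t) • B
      = Real.exp t • (A + s • B) - (2 * Real.exp (-t)) • B := by
    rw [smul_add, smul_smul, hs, ← Real.exp_add]
    have : t + -2 * t = -t := by ring
    rw [this]
    module
  have hdetJ : IsUnit (Real.exp t • A + Real.exp (-t) • B).det := by
    rw [hJ, det_smul, isUnit_iff_ne_zero]
    exact mul_ne_zero (pow_ne_zero _ (Real.exp_ne_zero _)) hdne
  refine ⟨(isUnit_iff_isUnit_det _).mpr hdetJ, ?_⟩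
  -- inverse formula
  have hMinv : (A + s • B) * (A + s • B)⁻¹ = 1 :=
    mul_nonsing_inv _ (isUnit_iff_ne_zero.mpr hdne)
  have hJinv : (Real.exp t • A + Real.exp (-t) • B)⁻¹
      = Real.exp (-t) • (A + s • B)⁻¹ := by
    apply inv_eq_right_inv
    rw [hJ, smul_mul, Matrix.mul_smul, smul_smul, ← Real.exp_add, hMinv, add_neg_cancel,
      Real.exp_zero, one_smul]
  rw [hJinv, hJ']
  have key : (Real.exp t • (A + s • B) - (2 * Real.exp (-t)) • B)
      * (Real.exp (-t) • (A + s • B)⁻¹) - 1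
      = -((2 * (Real.exp (-t) * Real.exp (-t))) • (B * (A + s • B)⁻¹)) := by
    rw [sub_mul, smul_mul, Matrix.mul_smul, smul_smul, ← Real.exp_add, add_neg_cancel,
      Real.exp_zero, one_smul, hMinv, smul_mul, Matrix.mul_smul, smul_smul]
    module
  rw [key, norm_neg, norm_smul]
  have he2 : Real.exp (-t) * Real.exp (-t) = Real.exp (-2 * t) := by
    rw [← Real.exp_add]; ring_nf
  rw [he2, Real.norm_eq_abs, abs_of_pos (by positivity)]
  calc 2 * Real.exp (-2 * t) * ‖B * (A + s • B)⁻¹‖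
      ≤ 2 * Real.exp (-2 * t) * K := by
        apply mul_le_mul_of_nonneg_left hnb.le (by positivity)
    _ = 2 * K * Real.exp (-2 * t) := by ring
end
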